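/- arXiv:1704.04670 — 8 statements merged into one kernel-verified Lean document; each statement's English description precedes it below -/
import Mathlib

section
/- The matrix equation AX - XB = C has a solution X if and only if the block matrices [[A, C], [0, B]] and [[A, 0], [0, B]] are similar. -/
open Matrix

section RothAux

variable {F : Type*} [Field F] {n m : ℕ}

/-- The Sylvester-type linear map `P ↦ M*P - P*N`. -/
noncomputable def rothSylv (M N : Matrix (Fin n ⊕ Fin m) (Fin n ⊕ Fin m) F) :
    Matrix (Fin n ⊕ Fin m) (Fin n ⊕ Fin m) F →ₗ[F]
      Matrix (Fin n ⊕ Fin m) (Fin n ⊕ Fin m) F :=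
  LinearMap.mulLeft F M - LinearMap.mulRight F N

lemma rothSylv_apply (M N P : Matrix (Fin n ⊕ Fin m) (Fin n ⊕ Fin m) F) :
    rothSylv M N P = M * P - P * N := by
  simp [rothSylv, LinearMap.sub_apply]

/-- Projection onto the bottom two blocks. -/
def rothProj :
    Matrix (Fin n ⊕ Fin m) (Fin n ⊕ Fin m) F →ₗ[F]
      Matrix (Fin m) (Fin n) F × Matrix (Fin m) (Fin m) F where
  toFun P := (P.toBlocks₂₁, P.toBlocks₂₂)
  map_add' P Q := by
    refine Prod.ext ?_ ?_ <;> ext i j <;> rfl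
  map_smul' c P := by
    refine Prod.ext ?_ ?_ <;> ext i j <;> rfl

end RothAux

set_option maxHeartbeats 1000000 in
set_option synthInstance.maxHeartbeats 400000 in
/-- Roth's removal theorem: `AX - XB = C` has a solution iff
`[[A,C],[0,B]]` and `[[A,0],[0,B]]` are similar. -/
theorem roth_similarity {F : Type*} [Field F] {n m : ℕ}
    (A : Matrix (Fin n) (Fin n) F) (B : Matrix (Fin m) (Fin m) F)
    (C : Matrix (Fin n) (Fin m) F) :
    (∃ X : Matrix (Fin n) (Fin m) F, A * X - X * B = C) ↔
      ∃ S : Matrix (Fin n ⊕ Fin m) (Fin n ⊕ Fin m) F, IsUnit S ∧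
        S⁻¹ * fromBlocks A C 0 B * S = fromBlocks A 0 0 B := by
  constructor
  · -- easy direction
    rintro ⟨X, hX⟩
    refine ⟨fromBlocks 1 (-X) 0 1, ?_, ?_⟩
    · rw [Matrix.isUnit_iff_isUnit_det, det_fromBlocks_zero₂₁]
      simp
    · have hMS : fromBlocks A C 0 B * fromBlocks 1 (-X) 0 1 =
          fromBlocks 1 (-X) 0 1 * fromBlocks A 0 0 B := by
        rw [fromBlocks_multiply, fromBlocks_multiply]
        refine fromBlocks_inj.mpr ⟨by simp, ?_, by simp, by simp⟩
        simp only [Matrix.mul_one, Matrix.one_mul, Matrix.mul_zero, Matrix.zero_mul,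
          add_zero, zero_add, Matrix.mul_neg, Matrix.neg_mul]
        rw [← hX]
        abel
      have hU : IsUnit (fromBlocks 1 (-X) 0 1 : Matrix (Fin n ⊕ Fin m) (Fin n ⊕ Fin m) F).det := by
        rw [det_fromBlocks_zero₂₁]; simp
      rw [mul_assoc, hMS, ← mul_assoc, Matrix.nonsing_inv_mul _ hU, one_mul]
  · -- hard direction (Flanders–Wimmer proof)
    rintro ⟨S, hS, hSim⟩
    set M := fromBlocks A C 0 B with hM
    set N := fromBlocks A 0 0 B with hN
    have hdet : IsUnit S.det := (Matrix.isUnit_iff_isUnit_det S).mp hS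
    have hMS : M * S = S * N := by
      have := congrArg (fun T => S * T) hSim
      simpa [← mul_assoc, Matrix.mul_nonsing_inv _ hdet] using this
    -- the linear equivalence `P ↦ S⁻¹ * P`
    let e : Matrix (Fin n ⊕ Fin m) (Fin n ⊕ Fin m) F ≃ₗ[F]
        Matrix (Fin n ⊕ Fin m) (Fin n ⊕ Fin m) F :=
      LinearEquiv.ofLinear (LinearMap.mulLeft F S⁻¹) (LinearMap.mulLeft F S)
        (by ext P; simp [LinearMap.mulLeft_apply, ← mul_assoc,
              Matrix.nonsing_inv_mul _ hdet])
        (by ext P; simp [LinearMap.mulLeft_apply, ← mul_assoc,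
              Matrix.mul_nonsing_inv _ hdet])
    set VM := LinearMap.ker (rothSylv M N) with hVM
    set VN := LinearMap.ker (rothSylv N N) with hVN
    have memVM : ∀ P, P ∈ VM ↔ M * P = P * N := by
      intro P
      rw [hVM, LinearMap.mem_ker, rothSylv_apply, sub_eq_zero]
    have memVN : ∀ P, P ∈ VN ↔ N * P = P * N := by
      intro P
      rw [hVN, LinearMap.mem_ker, rothSylv_apply, sub_eq_zero]
    -- e maps VM onto VN
    have hmap : Submodule.map (e : _ →ₗ[F] _) VM = VN := by
      ext P
      rw [Submodule.mem_map_equiv]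
      have hesymm : e.symm P = S * P := rfl
      rw [hesymm, memVM, memVN]
      constructor
      · intro h
        have h2 : M * (S * P) = S * (P * N) := by rw [h, mul_assoc]
        rw [← mul_assoc, hMS, mul_assoc] at h2
        have := congrArg (fun T => S⁻¹ * T) h2
        simpa [← mul_assoc, Matrix.nonsing_inv_mul _ hdet] using this
      · intro h
        rw [← mul_assoc, hMS, mul_assoc, h, mul_assoc]
    have hrankV : Module.finrank F VM = Module.finrank F VN := by
      rw [← hmap]
      exact (LinearEquiv.finrank_map_eq e VM).symm
    -- kernels of the projections agree
    have hker : LinearMap.ker (rothProj (F := F) (n := n) (m := m)) ⊓ VM =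
        LinearMap.ker rothProj ⊓ VN := by
      ext P
      simp only [Submodule.mem_inf, memVM, memVN]
      constructor <;> rintro ⟨hpr, hc⟩ <;> refine ⟨hpr, ?_⟩ <;>
      · rw [LinearMap.mem_ker] at hpr
        have h21 : P.toBlocks₂₁ = 0 := congrArg Prod.fst hpr
        have h22 : P.toBlocks₂₂ = 0 := congrArg Prod.snd hpr
        have hPd : P = fromBlocks P.toBlocks₁₁ P.toBlocks₁₂ 0 0 := by
          conv_lhs => rw [← fromBlocks_toBlocks P]
          rw [h21, h22]
        have hNP : M * P = N * P := by
          rw [hPd, hM, hN, fromBlocks_multiply, fromBlocks_multiply]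
          refine fromBlocks_inj.mpr ⟨by simp, by simp, by simp, by simp⟩
        first
        | rw [← hNP]; exact hc
        | rw [hNP]; exact hc
    -- projections of VM and VN
    have key : Submodule.map (rothProj (F := F) (n := n) (m := m)) VM =
        Submodule.map rothProj VN := by
      have hle : Submodule.map (rothProj (F := F) (n := n) (m := m)) VM ≤
          Submodule.map rothProj VN := by
        rintro p ⟨P, hP, rfl⟩
        replace hP := (memVM P).mp hP
        have hPd := (fromBlocks_toBlocks P).symm
        rw [hPd, hM, hN, fromBlocks_multiply, fromBlocks_multiply, fromBlocks_inj] at hP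
        obtain ⟨-, -, h21, h22⟩ := hP
        simp only [Matrix.zero_mul, Matrix.mul_zero, zero_add, add_zero] at h21 h22
        refine ⟨fromBlocks 0 0 P.toBlocks₂₁ P.toBlocks₂₂, (memVN _).mpr ?_, ?_⟩
        · rw [hN, fromBlocks_multiply, fromBlocks_multiply]
          refine fromBlocks_inj.mpr ⟨by simp, by simp, ?_, ?_⟩
          · simpa using h21
          · simpa using h22
        · show (_, _) = (P.toBlocks₂₁, P.toBlocks₂₂)
          rw [toBlocks_fromBlocks₂₁, toBlocks_fromBlocks₂₂]
      refine Submodule.eq_of_le_of_finrank_eq hle ?_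
      -- rank–nullity on both restrictions
      have rn : ∀ (V : Submodule F (Matrix (Fin n ⊕ Fin m) (Fin n ⊕ Fin m) F)),
          Module.finrank F ↥(Submodule.map (rothProj (F := F) (n := n) (m := m)) V) +
            Module.finrank F ↥(LinearMap.ker (rothProj (F := F) (n := n) (m := m)) ⊓ V) =
              Module.finrank F ↥V := by
        intro V
        have h1 := LinearMap.finrank_range_add_finrank_ker
          ((rothProj (F := F) (n := n) (m := m)).comp V.subtype)
        rw [LinearMap.range_comp, Submodule.range_subtype] at h1
        have h2 : LinearMap.ker ((rothProj (F := F) (n := n) (m := m)).comp V.subtype) =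
            Submodule.comap V.subtype (LinearMap.ker rothProj ⊓ V) := by
          rw [LinearMap.ker_comp]
          ext x
          simp [Submodule.mem_comap, x.2]
        rw [h2] at h1
        have h3 : Module.finrank F
              ↥(Submodule.comap V.subtype
                (LinearMap.ker (rothProj (F := F) (n := n) (m := m)) ⊓ V)) =
            Module.finrank F ↥(LinearMap.ker (rothProj (F := F) (n := n) (m := m)) ⊓ V) :=
          LinearEquiv.finrank_eq (Submodule.comapSubtypeEquivOfLe inf_le_right)
        rw [h3] at h1
        exact h1
      have e1 := rn VM
      have e2 := rn VN
      rw [hker, hrankV] at e1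
      omega
    -- `(0, 1)` lies in the projection of VN
    have h01 : ((0 : Matrix (Fin m) (Fin n) F), (1 : Matrix (Fin m) (Fin m) F)) ∈
        Submodule.map (rothProj (F := F) (n := n) (m := m)) VN := by
      refine ⟨fromBlocks 0 0 0 1, (memVN _).mpr ?_, ?_⟩
      · rw [hN, fromBlocks_multiply, fromBlocks_multiply]
        refine fromBlocks_inj.mpr ⟨by simp, by simp, by simp, by simp⟩
      · show (_, _) = ((0 : Matrix (Fin m) (Fin n) F), (1 : Matrix (Fin m) (Fin m) F))
        rw [toBlocks_fromBlocks₂₁, toBlocks_fromBlocks₂₂]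
    rw [← key] at h01
    obtain ⟨P, hP, hPpr⟩ := h01
    replace hP := (memVM P).mp hP
    have h21 : P.toBlocks₂₁ = 0 := congrArg Prod.fst hPpr
    have h22 : P.toBlocks₂₂ = 1 := congrArg Prod.snd hPpr
    have hPd : P = fromBlocks P.toBlocks₁₁ P.toBlocks₁₂ 0 1 := by
      conv_lhs => rw [← fromBlocks_toBlocks P]
      rw [h21, h22]
    rw [hPd, hM, hN, fromBlocks_multiply, fromBlocks_multiply, fromBlocks_inj] at hP
    obtain ⟨-, h12, -, -⟩ := hP
    simp only [Matrix.mul_one, Matrix.mul_zero, Matrix.zero_mul, add_zero, zero_add] at h12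
    refine ⟨-P.toBlocks₁₂, ?_⟩
    rw [Matrix.mul_neg, Matrix.neg_mul, sub_eq_iff_eq_add]
    rw [← h12]
    abel
end

section
/- The matrix equation AX - YB = C has a solution pair (X, Y) if and only if the block matrices [[A, C], [0, B]] and [[A, 0], [0, B]] are equivalent. -/
/-!
Multiplying `[[A, C], [0, B]]` by `[[1, Y], [0, 1]]` on the left and by `[[1, -X], [0, 1]]` on the
right replaces `C` by `C - (AX - YB)`, which gives one direction. Conversely, equivalent matrices
have the same rank. The kernel of `(u, w) ↦ (a u + c w, b w)` has dimension
`dim ker a + dim (ker b ⊓ c⁻¹(range a))`, so equal ranks force `c` to map `ker b` into `range a`.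
That condition makes `a x - y b = c` solvable: if `a a⁺ a = a` and `b b⁺ b = b`, then `x = a⁺ c`
and `y = (a a⁺ c - c) b⁺` work.
-/

open Matrix Module

namespace LinearMap

variable {K V₁ V₂ W₁ W₂ : Type*} [Field K] [AddCommGroup V₁] [Module K V₁] [AddCommGroup V₂]
  [Module K V₂] [AddCommGroup W₁] [Module K W₁] [AddCommGroup W₂] [Module K W₂]

theorem exists_comp_comp_eq_self (f : V₁ →ₗ[K] V₂) : ∃ g : V₂ →ₗ[K] V₁, f ∘ₗ g ∘ₗ f = f := by
  obtain ⟨σ, hσ⟩ := f.rangeRestrict.exists_rightInverse_of_surjective f.range_rangeRestrict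
  obtain ⟨g, hg⟩ := exists_extend σ
  refine ⟨g, ext fun v => ?_⟩
  have hgf : g (f v) = σ (f.rangeRestrict v) := congr($hg (f.rangeRestrict v))
  simpa [hgf] using congr(Subtype.val ($hσ (f.rangeRestrict v)))

theorem exists_comp_sub_comp_eq_of_ker_le (a : V₁ →ₗ[K] V₂) (b : W₁ →ₗ[K] W₂) (c : W₁ →ₗ[K] V₂)
    (h : ker b ≤ (range a).comap c) : ∃ x y, a ∘ₗ x - y ∘ₗ b = c := by
  obtain ⟨a', ha⟩ := a.exists_comp_comp_eq_self
  obtain ⟨b', hb⟩ := b.exists_comp_comp_eq_self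
  refine ⟨a' ∘ₗ c, (a ∘ₗ a' ∘ₗ c - c) ∘ₗ b', ext fun w => ?_⟩
  obtain ⟨v, hv⟩ : c (w - b' (b w)) ∈ range a := h <| mem_ker.2 <| by
    rw [map_sub, sub_eq_zero]; exact congr($hb w).symm
  have hav : a (a' (a v)) = a v := congr($ha v)
  simp only [hv, map_sub] at hav
  simp only [sub_apply, comp_apply]
  rw [← sub_add, hav, sub_add_cancel]

def blockUpperTriangular (a : V₁ →ₗ[K] V₂) (c : W₁ →ₗ[K] V₂) (b : W₁ →ₗ[K] W₂) :
    V₁ × W₁ →ₗ[K] V₂ × W₂ :=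
  (a.coprod c).prod (b ∘ₗ snd K V₁ W₁)

@[simp]
theorem blockUpperTriangular_apply (a : V₁ →ₗ[K] V₂) (c : W₁ →ₗ[K] V₂) (b : W₁ →ₗ[K] W₂)
    (p : V₁ × W₁) : blockUpperTriangular a c b p = (a p.1 + c p.2, b p.2) :=
  rfl

theorem finrank_ker_blockUpperTriangular [FiniteDimensional K V₁] [FiniteDimensional K W₁]
    (a : V₁ →ₗ[K] V₂) (c : W₁ →ₗ[K] V₂) (b : W₁ →ₗ[K] W₂) :
    finrank K (ker (blockUpperTriangular a c b)) =
      finrank K (ker a) + finrank K ↥(ker b ⊓ (range a).comap c) := by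
  set π := (snd K V₁ W₁).domRestrict (ker (blockUpperTriangular a c b))
  have hrange : range π = ker b ⊓ (range a).comap c := by
    ext w
    simp only [π, range_domRestrict, Submodule.mem_map, mem_ker, blockUpperTriangular_apply,
      Prod.mk_eq_zero, add_eq_zero_iff_neg_eq, ← map_neg, snd_apply, and_comm, Prod.exists,
      exists_eq_left, exists_and_right, Submodule.mem_inf, Submodule.mem_comap, mem_range,
      and_congr_left_iff]
    exact fun _ => (neg_surjective.exists (p := fun y => a y = c w)).symm
  let e : ker π ≃ₗ[K] ker a :=
    { toFun := fun p => ⟨p.1.1.1, by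
        have h := congr(Prod.fst $(mem_ker.1 p.1.2))
        rwa [blockUpperTriangular_apply, show p.1.1.2 = 0 from p.2, map_zero, add_zero] at h⟩
      invFun := fun u => ⟨⟨(u, 0), by simp⟩, by simp [π]⟩
      map_add' := fun _ _ => rfl
      map_smul' := fun _ _ => rfl
      left_inv := fun p => Subtype.ext <| Subtype.ext <| Prod.ext rfl (mem_ker.1 p.2).symm
      right_inv := fun u => rfl }
  rw [← e.finrank_eq, ← hrange, add_comm, finrank_range_add_finrank_ker]

theorem ker_le_comap_range_of_finrank_range_blockUpperTriangular_eq [FiniteDimensional K V₁]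
    [FiniteDimensional K W₁] (a : V₁ →ₗ[K] V₂) (c : W₁ →ₗ[K] V₂) (b : W₁ →ₗ[K] W₂)
    (h : finrank K (range (blockUpperTriangular a c b)) =
      finrank K (range (blockUpperTriangular a 0 b))) :
    ker b ≤ (range a).comap c := by
  have hker := finrank_ker_blockUpperTriangular a c b
  have hker₀ := finrank_ker_blockUpperTriangular a 0 b
  have hc := finrank_range_add_finrank_ker (blockUpperTriangular a c b)
  have h₀ := finrank_range_add_finrank_ker (blockUpperTriangular a 0 b)
  rw [Submodule.comap_zero, inf_top_eq] at hker₀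
  have hinf : ker b ⊓ (range a).comap c = ker b :=
    Submodule.eq_of_le_of_finrank_eq inf_le_left (by omega)
  exact hinf ▸ inf_le_right

theorem toMatrix_blockUpperTriangular {ι₁ ι₂ κ₁ κ₂ : Type*} [Fintype ι₁] [Fintype κ₁]
    [DecidableEq ι₁] [DecidableEq κ₁] [Finite ι₂] [Finite κ₂]
    (bV₁ : Basis ι₁ K V₁) (bV₂ : Basis ι₂ K V₂) (bW₁ : Basis κ₁ K W₁) (bW₂ : Basis κ₂ K W₂)
    (a : V₁ →ₗ[K] V₂) (c : W₁ →ₗ[K] V₂) (b : W₁ →ₗ[K] W₂) :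
    toMatrix (bV₁.prod bW₁) (bV₂.prod bW₂) (blockUpperTriangular a c b) =
      fromBlocks (toMatrix bV₁ bV₂ a) (toMatrix bW₁ bV₂ c) 0 (toMatrix bW₁ bW₂ b) := by
  ext (i | i) (j | j) <;> simp [toMatrix_apply, Basis.prod_repr_inl, Basis.prod_repr_inr]

end LinearMap

namespace Matrix

open LinearMap

theorem fromBlocks_one_mul_fromBlocks_mul_fromBlocks_one {R l m : Type*} [Ring R] [Fintype l]
    [Fintype m] [DecidableEq l] [DecidableEq m] (A : Matrix l l R) (B : Matrix m m R)
    (C X Y : Matrix l m R) :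
    fromBlocks 1 Y 0 1 * fromBlocks A C 0 B * fromBlocks 1 (-X) 0 1 =
      fromBlocks A (C - (A * X - Y * B)) 0 B := by
  simp only [fromBlocks_multiply, Matrix.one_mul, Matrix.mul_one, Matrix.mul_zero,
    Matrix.zero_mul, add_zero, zero_add, Matrix.mul_neg, neg_zero]
  congr 1
  abel

variable {K : Type*} [Field K] {l₁ l₂ m₁ m₂ : Type*} [Fintype l₁] [Fintype l₂] [Fintype m₁]
  [Fintype m₂] [DecidableEq l₁] [DecidableEq m₁]

theorem rank_fromBlocks_zero₂₁ (A : Matrix l₂ l₁ K) (C : Matrix l₂ m₁ K) (B : Matrix m₂ m₁ K) :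
    (fromBlocks A C 0 B).rank =
      finrank K (range (blockUpperTriangular (toLin' A) (toLin' C) (toLin' B))) := by
  let bl := (Pi.basisFun K l₁).prod (Pi.basisFun K m₁)
  let br := (Pi.basisFun K l₂).prod (Pi.basisFun K m₂)
  have hT : toLin bl br (fromBlocks A C 0 B) =
      blockUpperTriangular (toLin' A) (toLin' C) (toLin' B) := by
    apply (toMatrix bl br).injective
    rw [toMatrix_toLin, toMatrix_blockUpperTriangular]
    simp only [← Matrix.toLin_eq_toLin', toMatrix_toLin]
  rw [rank_eq_finrank_range_toLin _ br bl, hT]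

theorem exists_mul_sub_mul_eq_of_rank_fromBlocks_eq [DecidableEq m₂] (A : Matrix l₂ l₁ K)
    (B : Matrix m₂ m₁ K) (C : Matrix l₂ m₁ K)
    (h : (fromBlocks A C 0 B).rank = (fromBlocks A 0 0 B).rank) :
    ∃ (X : Matrix l₁ m₁ K) (Y : Matrix l₂ m₂ K), A * X - Y * B = C := by
  rw [rank_fromBlocks_zero₂₁, rank_fromBlocks_zero₂₁, map_zero] at h
  obtain ⟨x, y, hxy⟩ := exists_comp_sub_comp_eq_of_ker_le _ _ _
    (ker_le_comap_range_of_finrank_range_blockUpperTriangular_eq _ _ _ h)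
  refine ⟨toMatrix' x, toMatrix' y, toLin'.injective ?_⟩
  rwa [map_sub, toLin'_mul, toLin'_mul, toLin'_toMatrix', toLin'_toMatrix']

end Matrix

/-- Roth's equivalence theorem: `AX - YB = C` has a solution iff
`[[A,C],[0,B]]` and `[[A,0],[0,B]]` are equivalent. -/
theorem roth_equivalence {F : Type*} [Field F] {n m : ℕ}
    (A : Matrix (Fin n) (Fin n) F) (B : Matrix (Fin m) (Fin m) F)
    (C : Matrix (Fin n) (Fin m) F) :
    (∃ X Y : Matrix (Fin n) (Fin m) F, A * X - Y * B = C) ↔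
      ∃ P Q : Matrix (Fin n ⊕ Fin m) (Fin n ⊕ Fin m) F, IsUnit P ∧ IsUnit Q ∧
        P * fromBlocks A C 0 B * Q = fromBlocks A 0 0 B := by
  constructor
  · rintro ⟨X, Y, rfl⟩
    refine ⟨fromBlocks 1 Y 0 1, fromBlocks 1 (-X) 0 1, by simp, by simp, ?_⟩
    rw [fromBlocks_one_mul_fromBlocks_mul_fromBlocks_one, sub_self]
  · rintro ⟨P, Q, hP, hQ, hPQ⟩
    refine exists_mul_sub_mul_eq_of_rank_fromBlocks_eq A B C ?_
    rw [← hPQ, rank_mul_eq_left_of_isUnit_det _ _ ((isUnit_iff_isUnit_det Q).1 hQ),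
      rank_mul_eq_right_of_isUnit_det _ _ ((isUnit_iff_isUnit_det P).1 hP)]
end

section
/- The complex matrix equation A·conj(X) - X·B = C has a solution X if and only if the block matrices [[A, C], [0, B]] and [[A, 0], [0, B]] are consimilar, i.e., there exists a nonsingular complex matrix S with conj(S)⁻¹·[[A, C], [0, B]]·S = [[A, 0], [0, B]]. -/
open Matrix FiniteDimensional

namespace BHHaux

noncomputable section

private lemma conj_add {p q : Type*} (Z W : Matrix p q ℂ) :
    (Z + W).map (starRingEnd ℂ) = Z.map (starRingEnd ℂ) + W.map (starRingEnd ℂ) :=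
  Matrix.map_add _ (by simp) _ _

private lemma conj_smul {p q : Type*} (r : ℝ) (Z : Matrix p q ℂ) :
    (r • Z).map (starRingEnd ℂ) = r • Z.map (starRingEnd ℂ) :=
  Matrix.map_smul _ r (fun a => by
    simp only [starRingEnd_apply, star_smul, star_trivial]) _

variable {m : ℕ}

/-- The ℝ-linear map `Z ↦ M * conj Z - Z * B`. -/
def Phi {p : Type*} [Fintype p] (M : Matrix p p ℂ) (B : Matrix (Fin m) (Fin m) ℂ) :
    Matrix p (Fin m) ℂ →ₗ[ℝ] Matrix p (Fin m) ℂ where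
  toFun Z := M * Z.map (starRingEnd ℂ) - Z * B
  map_add' Z W := by
    rw [conj_add, Matrix.mul_add, Matrix.add_mul]; abel
  map_smul' r Z := by
    rw [conj_smul, RingHom.id_apply, Matrix.mul_smul, Matrix.smul_mul, smul_sub]

@[simp] lemma Phi_apply {p : Type*} [Fintype p] (M : Matrix p p ℂ)
    (B : Matrix (Fin m) (Fin m) ℂ) (Z : Matrix p (Fin m) ℂ) :
    Phi M B Z = M * Z.map (starRingEnd ℂ) - Z * B := rfl

variable {n : ℕ}

/-- Bottom rows, as an ℝ-linear map. -/
def botRows : Matrix (Fin n ⊕ Fin m) (Fin m) ℂ →ₗ[ℝ] Matrix (Fin m) (Fin m) ℂ where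
  toFun Z := Z.toRows₂
  map_add' Z W := by ext i j; simp [toRows₂]
  map_smul' r Z := by ext i j; simp [toRows₂]

@[simp] lemma botRows_apply (Z : Matrix (Fin n ⊕ Fin m) (Fin m) ℂ) :
    botRows Z = Z.toRows₂ := rfl

private lemma conj_fromRows (Z₁ : Matrix (Fin n) (Fin m) ℂ) (Z₂ : Matrix (Fin m) (Fin m) ℂ) :
    (fromRows Z₁ Z₂).map (starRingEnd ℂ)
      = fromRows (Z₁.map (starRingEnd ℂ)) (Z₂.map (starRingEnd ℂ)) := by
  ext (i | i) j <;> rfl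

private lemma fromRows_sub (A₁ B₁ : Matrix (Fin n) (Fin m) ℂ) (A₂ B₂ : Matrix (Fin m) (Fin m) ℂ) :
    fromRows A₁ A₂ - fromRows B₁ B₂ = fromRows (A₁ - B₁) (A₂ - B₂) := by
  ext (i | i) j <;> rfl

/-- Key block computation for `Phi` of an upper block triangular matrix. -/
lemma Phi_fromBlocks (A : Matrix (Fin n) (Fin n) ℂ) (B : Matrix (Fin m) (Fin m) ℂ)
    (C : Matrix (Fin n) (Fin m) ℂ) (Z : Matrix (Fin n ⊕ Fin m) (Fin m) ℂ) :
    Phi (fromBlocks A C 0 B) B Z =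
      fromRows (A * Z.toRows₁.map (starRingEnd ℂ) + C * Z.toRows₂.map (starRingEnd ℂ)
          - Z.toRows₁ * B)
        (B * Z.toRows₂.map (starRingEnd ℂ) - Z.toRows₂ * B) := by
  conv_lhs => rw [Phi_apply, ← fromRows_toRows Z]
  rw [conj_fromRows, fromBlocks_mul_fromRows, fromRows_mul, fromRows_sub]
  rw [Matrix.zero_mul, zero_add]

end

end BHHaux

open Matrix BHHaux Module Submodule

set_option synthInstance.maxHeartbeats 1000000 in
set_option maxHeartbeats 1000000 in
/-- Bevis–Hall–Hartwig: `A·conj(X) - X·B = C` has a solution iff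
`[[A,C],[0,B]]` and `[[A,0],[0,B]]` are consimilar. -/
theorem bevis_hall_hartwig {n m : ℕ}
    (A : Matrix (Fin n) (Fin n) ℂ) (B : Matrix (Fin m) (Fin m) ℂ)
    (C : Matrix (Fin n) (Fin m) ℂ) :
    (∃ X : Matrix (Fin n) (Fin m) ℂ, A * X.map (starRingEnd ℂ) - X * B = C) ↔
      ∃ S : Matrix (Fin n ⊕ Fin m) (Fin n ⊕ Fin m) ℂ, IsUnit S ∧
        (S.map (starRingEnd ℂ))⁻¹ * fromBlocks A C 0 B * S = fromBlocks A 0 0 B := by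
  constructor
  · -- easy direction: explicit block unipotent S
    rintro ⟨X, hX⟩
    refine ⟨fromBlocks 1 (-(X.map (starRingEnd ℂ))) 0 1, ?_, ?_⟩
    · rw [Matrix.isUnit_iff_isUnit_det, det_fromBlocks_zero₂₁]
      simp
    · have hconj : (fromBlocks 1 (-(X.map (starRingEnd ℂ))) 0 1 :
          Matrix (Fin n ⊕ Fin m) (Fin n ⊕ Fin m) ℂ).map (starRingEnd ℂ)
          = fromBlocks 1 (-X) 0 1 := by
        ext (i | i) (j | j) <;>
          simp [fromBlocks, Matrix.one_apply, apply_ite (starRingEnd ℂ)]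
      rw [hconj]
      have hinv : (fromBlocks 1 (-X) 0 1 : Matrix (Fin n ⊕ Fin m) (Fin n ⊕ Fin m) ℂ)⁻¹
          = fromBlocks 1 X 0 1 := by
        apply Matrix.inv_eq_right_inv
        rw [fromBlocks_multiply]
        simp [← fromBlocks_one]
      rw [hinv, fromBlocks_multiply, fromBlocks_multiply]
      simp only [Matrix.one_mul, Matrix.mul_one, Matrix.zero_mul, Matrix.mul_zero,
        add_zero, zero_add, Matrix.mul_neg]
      rw [← hX]
      have e2 : -(A * X.map (starRingEnd ℂ)) + (A * X.map (starRingEnd ℂ) - X * B + X * B)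
          = (0 : Matrix (Fin n) (Fin m) ℂ) := by abel
      have e4 : -(0 : Matrix (Fin m) (Fin m) ℂ) + B = B := by abel
      rw [e2, e4]
  · -- hard direction: Flanders–Wimmer dimension count over ℝ
    rintro ⟨S, hS, hcons⟩
    set M : Matrix (Fin n ⊕ Fin m) (Fin n ⊕ Fin m) ℂ := fromBlocks A C 0 B with hM
    set N : Matrix (Fin n ⊕ Fin m) (Fin n ⊕ Fin m) ℂ := fromBlocks A 0 0 B with hN
    set T : Matrix (Fin n ⊕ Fin m) (Fin n ⊕ Fin m) ℂ := S.map (starRingEnd ℂ) with hT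
    have hTu : IsUnit T := by
      have hdet : T.det = (starRingEnd ℂ) S.det := (RingHom.map_det (starRingEnd ℂ) S).symm
      rw [Matrix.isUnit_iff_isUnit_det, hdet]
      exact ((Matrix.isUnit_iff_isUnit_det S).mp hS).map (starRingEnd ℂ)
    have hTd : IsUnit T.det := (Matrix.isUnit_iff_isUnit_det T).mp hTu
    have hTconj : T.map (starRingEnd ℂ) = S := by
      ext i j; simp [hT]
    -- M * S = T * N
    have hMS : M * S = T * N := by
      calc M * S = T * (T⁻¹ * M * S) := by
            rw [← Matrix.mul_assoc, ← Matrix.mul_assoc, Matrix.mul_nonsing_inv T hTd,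
              Matrix.one_mul]
          _ = T * N := by rw [hcons]
    -- intertwining: Phi M B (T * Z) = T * Phi N B Z
    have hint : ∀ Z : Matrix (Fin n ⊕ Fin m) (Fin m) ℂ,
        Phi M B (T * Z) = T * Phi N B Z := by
      intro Z
      have : (T * Z).map (starRingEnd ℂ) = S * Z.map (starRingEnd ℂ) := by
        rw [Matrix.map_mul, hTconj]
      rw [Phi_apply, Phi_apply, this, ← Matrix.mul_assoc, hMS, Matrix.mul_sub,
        Matrix.mul_assoc, Matrix.mul_assoc]
    -- the left-multiplication equivalence
    let e : Matrix (Fin n ⊕ Fin m) (Fin m) ℂ ≃ₗ[ℝ] Matrix (Fin n ⊕ Fin m) (Fin m) ℂ :=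
      { toFun := fun Z => T * Z
        invFun := fun Z => T⁻¹ * Z
        map_add' := fun Z W => Matrix.mul_add T Z W
        map_smul' := fun r Z => Matrix.mul_smul T r Z
        left_inv := fun Z => by
          show T⁻¹ * (T * Z) = Z
          rw [← Matrix.mul_assoc, Matrix.nonsing_inv_mul T hTd, Matrix.one_mul]
        right_inv := fun Z => by
          show T * (T⁻¹ * Z) = Z
          rw [← Matrix.mul_assoc, Matrix.mul_nonsing_inv T hTd, Matrix.one_mul] }
    have hker : LinearMap.ker (Phi M B) =
        (LinearMap.ker (Phi N B)).map (e : Matrix (Fin n ⊕ Fin m) (Fin m) ℂ →ₗ[ℝ] _) := by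
      ext Z
      simp only [Submodule.mem_map, LinearMap.mem_ker]
      constructor
      · intro hZ
        refine ⟨T⁻¹ * Z, ?_, ?_⟩
        · have h1 : T * Phi N B (T⁻¹ * Z) = 0 := by
            rw [← hint, ← Matrix.mul_assoc, Matrix.mul_nonsing_inv T hTd, Matrix.one_mul, hZ]
          have := congrArg (fun W => T⁻¹ * W) h1
          simpa [← Matrix.mul_assoc, Matrix.nonsing_inv_mul T hTd] using this
        · show T * (T⁻¹ * Z) = Z
          rw [← Matrix.mul_assoc, Matrix.mul_nonsing_inv T hTd, Matrix.one_mul]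
      · rintro ⟨W, hW, rfl⟩
        show Phi M B (T * W) = 0
        rw [hint, hW, Matrix.mul_zero]
    have hrank : finrank ℝ (LinearMap.ker (Phi M B)) = finrank ℝ (LinearMap.ker (Phi N B)) := by
      rw [hker]; exact LinearEquiv.finrank_map_eq e _
    -- the two kernels agree on bottom-rows-zero matrices
    have hinf : LinearMap.ker (Phi M B) ⊓ LinearMap.ker (botRows) =
        LinearMap.ker (Phi N B) ⊓ LinearMap.ker (botRows) := by
      ext Z
      simp only [Submodule.mem_inf, LinearMap.mem_ker, botRows_apply]
      constructor <;> rintro ⟨h1, h2⟩ <;> refine ⟨?_, h2⟩ <;>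
        [rw [hN, Phi_fromBlocks]; rw [hM, Phi_fromBlocks]] <;>
        [rw [hM, Phi_fromBlocks] at h1; rw [hN, Phi_fromBlocks] at h1] <;>
        · rw [h2] at h1 ⊢
          simpa using h1
    -- dimension bookkeeping
    have hrk : ∀ K : Submodule ℝ (Matrix (Fin n ⊕ Fin m) (Fin m) ℂ),
        finrank ℝ (K.map botRows) + finrank ℝ ((K ⊓ LinearMap.ker botRows) : Submodule ℝ _)
          = finrank ℝ K := by
      intro K
      have h := LinearMap.finrank_range_add_finrank_ker ((botRows).domRestrict K)
      rw [LinearMap.range_domRestrict, LinearMap.ker_domRestrict] at h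
      have hco : (LinearMap.ker botRows).comap K.subtype
          = (K ⊓ LinearMap.ker botRows).comap K.subtype := by
        rw [Submodule.comap_inf, Submodule.comap_subtype_self, top_inf_eq]
      rw [hco] at h
      rw [← h]
      congr 1
      exact ((Submodule.comapSubtypeEquivOfLe (inf_le_left :
        K ⊓ LinearMap.ker botRows ≤ K)).finrank_eq).symm
    have himrank : finrank ℝ ((LinearMap.ker (Phi M B)).map botRows)
        = finrank ℝ ((LinearMap.ker (Phi N B)).map botRows) := by
      have h1 := hrk (LinearMap.ker (Phi M B))
      have h2 := hrk (LinearMap.ker (Phi N B))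
      rw [hinf] at h1
      omega
    -- image for N is the full "concommutant" of B
    have hNim : (LinearMap.ker (Phi N B)).map botRows = LinearMap.ker (Phi B B) := by
      apply le_antisymm
      · rintro Y ⟨Z, hZ, rfl⟩
        simp only [SetLike.mem_coe, LinearMap.mem_ker] at hZ ⊢
        rw [hN, Phi_fromBlocks, ← Matrix.fromRows_zero] at hZ
        exact ((fromRows_ext_iff _ _ _ _).mp hZ).2
      · intro Y hY
        rw [LinearMap.mem_ker] at hY
        refine ⟨fromRows 0 Y, ?_, rfl⟩
        simp only [SetLike.mem_coe, LinearMap.mem_ker]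
        have hY' : B * Y.map (starRingEnd ℂ) - Y * B = 0 := hY
        have h0 : (0 : Matrix (Fin n) (Fin m) ℂ).map (starRingEnd ℂ) = 0 :=
          Matrix.map_zero _ (map_zero _)
        rw [hN, Phi_fromBlocks, toRows₁_fromRows, toRows₂_fromRows, h0, hY']
        simp
    have hMle : (LinearMap.ker (Phi M B)).map botRows ≤ LinearMap.ker (Phi B B) := by
      rintro Y ⟨Z, hZ, rfl⟩
      simp only [SetLike.mem_coe, LinearMap.mem_ker] at hZ ⊢
      rw [hM, Phi_fromBlocks, ← Matrix.fromRows_zero] at hZ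
      exact ((fromRows_ext_iff _ _ _ _).mp hZ).2
    have hMim : (LinearMap.ker (Phi M B)).map botRows = LinearMap.ker (Phi B B) := by
      apply Submodule.eq_of_le_of_finrank_eq hMle
      rw [himrank, hNim]
    -- the identity lies in the image, extract the solution
    have hone : (1 : Matrix (Fin m) (Fin m) ℂ) ∈ LinearMap.ker (Phi B B) := by
      rw [LinearMap.mem_ker, Phi_apply]
      simp [Matrix.map_one (starRingEnd ℂ) (map_zero _) (map_one _)]
    rw [← hMim] at hone
    obtain ⟨Z, hZ, hZ2⟩ := hone
    simp only [SetLike.mem_coe, LinearMap.mem_ker] at hZ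
    rw [hM, Phi_fromBlocks] at hZ
    rw [botRows_apply] at hZ2
    rw [hZ2, ← Matrix.fromRows_zero] at hZ
    have htop := ((fromRows_ext_iff _ _ _ _).mp hZ).1
    rw [Matrix.map_one (starRingEnd ℂ) (map_zero _) (map_one _), Matrix.mul_one] at htop
    refine ⟨-Z.toRows₁, ?_⟩
    have hneg : (-Z.toRows₁).map (starRingEnd ℂ) = -(Z.toRows₁.map (starRingEnd ℂ)) := by
      ext i j; simp
    rw [hneg, Matrix.mul_neg, Matrix.neg_mul]
    have hC : C = Z.toRows₁ * B - A * (Z.toRows₁.map (starRingEnd ℂ)) := by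
      rw [← sub_eq_zero, ← htop]; abel
    rw [hC]; abel
end

section
/- A system of Sylvester-type matrix equations A_i X_{i'} - X_{i''} B_i = C_i (i = 1,…,s) with unknown matrices X_1,…,X_t over a field has a solution if and only if there exist invertible matrices P_1,…,P_t such that [[A_i, 0],[0, B_i]] · P_{i'} = P_{i''} · [[A_i, C_i],[0, B_i]] for all i. -/
open Matrix

namespace RothSystemAux

variable {R : Type*}

/-- Multiplying a block matrix by a row-partitioned matrix. -/
lemma fromBlocks_mul_eq [Semiring R] {m₁ m₂ n₁ n₂ o : Type*}
    [Fintype n₁] [Fintype n₂]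
    (B₁₁ : Matrix m₁ n₁ R) (B₁₂ : Matrix m₁ n₂ R) (B₂₁ : Matrix m₂ n₁ R) (B₂₂ : Matrix m₂ n₂ R)
    (A : Matrix (n₁ ⊕ n₂) o R) :
    fromBlocks B₁₁ B₁₂ B₂₁ B₂₂ * A =
      fromRows (B₁₁ * A.toRows₁ + B₁₂ * A.toRows₂) (B₂₁ * A.toRows₁ + B₂₂ * A.toRows₂) := by
  conv_lhs => rw [← fromRows_toRows A, fromBlocks_mul_fromRows]

/-- Multiplying a row-partitioned matrix by a matrix. -/
lemma mul_eq_fromRows [Semiring R] {n₁ n₂ o pp : Type*} [Fintype o]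
    (A : Matrix (n₁ ⊕ n₂) o R) (B : Matrix o pp R) :
    A * B = fromRows (A.toRows₁ * B) (A.toRows₂ * B) := by
  conv_lhs => rw [← fromRows_toRows A, fromRows_mul]

variable {F : Type*} [Field F] {s t : ℕ}

/-- The space of morphisms between two "quiver representations". -/
def homS (m n : Fin t → Type*) [∀ j, Fintype (m j)] [∀ j, Fintype (n j)]
    (f g : Fin s → Fin t)
    (S : ∀ i, Matrix (m (g i)) (m (f i)) F)
    (T : ∀ i, Matrix (n (g i)) (n (f i)) F) :
    Submodule F (∀ j, Matrix (m j) (n j) F) where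
  carrier := {φ | ∀ i, S i * φ (f i) = φ (g i) * T i}
  add_mem' := fun ha hb i => by
    simp only [Pi.add_apply, Matrix.mul_add, Matrix.add_mul, ha i, hb i]
  zero_mem' := fun i => by simp
  smul_mem' := fun c a ha i => by
    simp only [Pi.smul_apply, Matrix.mul_smul, Matrix.smul_mul, ha i]

lemma mem_homS {m n : Fin t → Type*} [∀ j, Fintype (m j)] [∀ j, Fintype (n j)]
    {f g : Fin s → Fin t}
    {S : ∀ i, Matrix (m (g i)) (m (f i)) F}
    {T : ∀ i, Matrix (n (g i)) (n (f i)) F}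
    {φ : ∀ j, Matrix (m j) (n j) F} :
    φ ∈ homS m n f g S T ↔ ∀ i, S i * φ (f i) = φ (g i) * T i := Iff.rfl

end RothSystemAux

set_option maxHeartbeats 1000000 in
set_option synthInstance.maxHeartbeats 400000 in
open RothSystemAux in
/-- Roth-type criterion for a system of Sylvester equations
`A_i X_{f i} - X_{g i} B_i = C_i`. -/
theorem roth_system {F : Type*} [Field F] {s t : ℕ}
    (p q : Fin t → ℕ) (f g : Fin s → Fin t)
    (A : ∀ i : Fin s, Matrix (Fin (p (g i))) (Fin (p (f i))) F)
    (B : ∀ i : Fin s, Matrix (Fin (q (g i))) (Fin (q (f i))) F)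
    (C : ∀ i : Fin s, Matrix (Fin (p (g i))) (Fin (q (f i))) F) :
    (∃ X : ∀ j : Fin t, Matrix (Fin (p j)) (Fin (q j)) F,
        ∀ i, A i * X (f i) - X (g i) * B i = C i) ↔
      ∃ P : ∀ j : Fin t, Matrix (Fin (p j) ⊕ Fin (q j)) (Fin (p j) ⊕ Fin (q j)) F,
        (∀ j, IsUnit (P j)) ∧
        ∀ i, fromBlocks (A i) 0 0 (B i) * P (f i)
              = P (g i) * fromBlocks (A i) (C i) 0 (B i) := by
  constructor
  · -- easy direction
    rintro ⟨X, hX⟩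
    refine ⟨fun j => fromBlocks 1 (X j) 0 1, fun j => ?_, fun i => ?_⟩
    · have hmul : fromBlocks (1 : Matrix (Fin (p j)) (Fin (p j)) F) (X j) 0 1 *
          fromBlocks (1 : Matrix (Fin (p j)) (Fin (p j)) F) (-(X j)) 0 1 =
          (1 : Matrix (Fin (p j) ⊕ Fin (q j)) (Fin (p j) ⊕ Fin (q j)) F) := by
        simp [Matrix.fromBlocks_multiply, ← Matrix.fromBlocks_one]
      exact ⟨⟨_, _, hmul, mul_eq_one_comm.mp hmul⟩, rfl⟩
    · have h : A i * X (f i) = C i + X (g i) * B i := eq_add_of_sub_eq (hX i)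
      simp [Matrix.fromBlocks_multiply, h]
  · -- hard direction (Flanders–Wimmer dimension counting)
    rintro ⟨P, hP, hPe⟩
    classical
    set N : ∀ i, Matrix (Fin (p (g i)) ⊕ Fin (q (g i))) (Fin (p (f i)) ⊕ Fin (q (f i))) F :=
      fun i => fromBlocks (A i) (C i) 0 (B i) with hNdef
    set M : ∀ i, Matrix (Fin (p (g i)) ⊕ Fin (q (g i))) (Fin (p (f i)) ⊕ Fin (q (f i))) F :=
      fun i => fromBlocks (A i) 0 0 (B i) with hMdef
    -- inverse of P
    set Q : ∀ j, Matrix (Fin (p j) ⊕ Fin (q j)) (Fin (p j) ⊕ Fin (q j)) F :=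
      fun j => ((hP j).unit⁻¹ : _) with hQdef
    have hPQ : ∀ j, P j * Q j = 1 := fun j => by
      rw [hQdef]; conv_lhs => rw [← (hP j).unit_spec]
      exact (hP j).unit.mul_inv
    have hQP : ∀ j, Q j * P j = 1 := fun j => by
      rw [hQdef]; conv_lhs => rw [← (hP j).unit_spec]
      exact (hP j).unit.inv_mul
    -- the four Hom-spaces
    set HN := homS (fun j => Fin (p j) ⊕ Fin (q j)) (fun j => Fin (q j)) f g N B with hHN
    set HM := homS (fun j => Fin (p j) ⊕ Fin (q j)) (fun j => Fin (q j)) f g M B with hHM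
    set HA := homS (fun j => Fin (p j)) (fun j => Fin (q j)) f g A B with hHA
    set HB := homS (fun j => Fin (q j)) (fun j => Fin (q j)) f g B B with hHB
    -- splitting the membership conditions into blocks
    have splitM : ∀ (i : Fin s) (φ : ∀ j, Matrix (Fin (p j) ⊕ Fin (q j)) (Fin (q j)) F),
        M i * φ (f i) = φ (g i) * B i ↔
          (A i * (φ (f i)).toRows₁ = (φ (g i)).toRows₁ * B i ∧
           B i * (φ (f i)).toRows₂ = (φ (g i)).toRows₂ * B i) := by
      intro i φ
      rw [hMdef, fromBlocks_mul_eq, mul_eq_fromRows, fromRows_ext_iff]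
      simp
    have splitN : ∀ (i : Fin s) (φ : ∀ j, Matrix (Fin (p j) ⊕ Fin (q j)) (Fin (q j)) F),
        N i * φ (f i) = φ (g i) * B i ↔
          (A i * (φ (f i)).toRows₁ + C i * (φ (f i)).toRows₂ = (φ (g i)).toRows₁ * B i ∧
           B i * (φ (f i)).toRows₂ = (φ (g i)).toRows₂ * B i) := by
      intro i φ
      rw [hNdef, fromBlocks_mul_eq, mul_eq_fromRows, fromRows_ext_iff]
      simp
    -- e1 : HN ≃ HM  (via P)
    have e1 : HN ≃ₗ[F] HM :=
      { toFun := fun φ => ⟨fun j => P j * φ.1 j, fun i => by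
          calc M i * (P (f i) * φ.1 (f i)) = M i * P (f i) * φ.1 (f i) := by
                rw [Matrix.mul_assoc]
            _ = P (g i) * (N i * φ.1 (f i)) := by rw [hPe i, Matrix.mul_assoc]
            _ = P (g i) * (φ.1 (g i) * B i) := by rw [mem_homS.mp φ.2 i]
            _ = P (g i) * φ.1 (g i) * B i := by rw [Matrix.mul_assoc]⟩
        map_add' := fun a b => Subtype.ext (funext fun j => by
          simp [Matrix.mul_add])
        map_smul' := fun c a => Subtype.ext (funext fun j => by
          simp [Matrix.mul_smul])
        invFun := fun ψ => ⟨fun j => Q j * ψ.1 j, fun i => by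
          have hNe : N i = Q (g i) * M i * P (f i) := by
            rw [Matrix.mul_assoc, hPe i, ← Matrix.mul_assoc, hQP, Matrix.one_mul]
          calc N i * (Q (f i) * ψ.1 (f i))
              = Q (g i) * M i * (P (f i) * Q (f i)) * ψ.1 (f i) := by
                rw [hNe]; simp only [Matrix.mul_assoc]
            _ = Q (g i) * (M i * ψ.1 (f i)) := by
                rw [hPQ]; simp only [Matrix.mul_one, Matrix.mul_assoc]
            _ = Q (g i) * (ψ.1 (g i) * B i) := by rw [mem_homS.mp ψ.2 i]
            _ = Q (g i) * ψ.1 (g i) * B i := by rw [Matrix.mul_assoc]⟩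
        left_inv := fun φ => Subtype.ext (funext fun j => by
          simp [← Matrix.mul_assoc, hQP])
        right_inv := fun ψ => Subtype.ext (funext fun j => by
          simp [← Matrix.mul_assoc, hPQ]) }
    -- e2 : HM ≃ HA × HB  (block decomposition)
    have e2 : HM ≃ₗ[F] HA × HB :=
      { toFun := fun φ =>
          (⟨fun j => (φ.1 j).toRows₁, fun i => ((splitM i φ.1).mp (mem_homS.mp φ.2 i)).1⟩,
           ⟨fun j => (φ.1 j).toRows₂, fun i => ((splitM i φ.1).mp (mem_homS.mp φ.2 i)).2⟩)
        map_add' := fun a b => by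
          refine Prod.ext (Subtype.ext (funext fun j => ?_)) (Subtype.ext (funext fun j => ?_)) <;>
            rfl
        map_smul' := fun c a => by
          refine Prod.ext (Subtype.ext (funext fun j => ?_)) (Subtype.ext (funext fun j => ?_)) <;>
            rfl
        invFun := fun uv => ⟨fun j => fromRows (uv.1.1 j) (uv.2.1 j), fun i =>
          (splitM i (fun j => fromRows (uv.1.1 j) (uv.2.1 j))).mpr (by
            simp [toRows₁_fromRows, toRows₂_fromRows,
              mem_homS.mp uv.1.2 i, mem_homS.mp uv.2.2 i])⟩
        left_inv := fun φ => Subtype.ext (funext fun j => fromRows_toRows (φ.1 j))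
        right_inv := fun uv => by
          refine Prod.ext (Subtype.ext (funext fun j => ?_)) (Subtype.ext (funext fun j => ?_))
          · exact toRows₁_fromRows _ _
          · exact toRows₂_fromRows _ _ }
    -- the projection π : HN → HB
    have hπmem : ∀ φ : HN, (fun j => (φ.1 j).toRows₂) ∈ HB := fun φ =>
      fun i => ((splitN i φ.1).mp (mem_homS.mp φ.2 i)).2
    set π : HN →ₗ[F] HB :=
      { toFun := fun φ => ⟨fun j => (φ.1 j).toRows₂, hπmem φ⟩
        map_add' := fun a b => Subtype.ext (funext fun j => rfl)
        map_smul' := fun c a => Subtype.ext (funext fun j => rfl) } with hπ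
    -- e3 : HA ≃ ker π
    have e3 : HA ≃ₗ[F] LinearMap.ker π :=
      { toFun := fun u => ⟨⟨fun j => fromRows (u.1 j) 0, fun i =>
            (splitN i (fun j => fromRows (u.1 j) 0)).mpr (by
              simp [toRows₁_fromRows, toRows₂_fromRows, mem_homS.mp u.2 i])⟩, by
          rw [LinearMap.mem_ker]
          exact Subtype.ext (funext fun j => toRows₂_fromRows _ _)⟩
        map_add' := fun a b => Subtype.ext (Subtype.ext (funext fun j => by
          ext (k | k) l <;> simp))
        map_smul' := fun c a => Subtype.ext (Subtype.ext (funext fun j => by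
          ext (k | k) l <;> simp))
        invFun := fun k => ⟨fun j => (k.1.1 j).toRows₁, fun i => by
          have hv : ∀ j, (k.1.1 j).toRows₂ = 0 := fun j =>
            congrFun (congrArg Subtype.val (LinearMap.mem_ker.mp k.2)) j
          have h := ((splitN i k.1.1).mp (mem_homS.mp k.1.2 i)).1
          rwa [hv (f i), Matrix.mul_zero, add_zero] at h⟩
        left_inv := fun u => Subtype.ext (funext fun j => toRows₁_fromRows _ _)
        right_inv := fun k => by
          have hv : ∀ j, (k.1.1 j).toRows₂ = 0 := fun j =>
            congrFun (congrArg Subtype.val (LinearMap.mem_ker.mp k.2)) j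
          refine Subtype.ext (Subtype.ext (funext fun j => ?_))
          ext (l | r) c
          · rfl
          · exact (congrFun (congrFun (hv j) r) c).symm }
    -- dimension counting
    have hrn := LinearMap.finrank_range_add_finrank_ker π
    have h1 : Module.finrank F HN = Module.finrank F HA + Module.finrank F HB := by
      rw [e1.finrank_eq, e2.finrank_eq, Module.finrank_prod]
    have h2 : Module.finrank F (LinearMap.ker π) = Module.finrank F HA := e3.symm.finrank_eq
    have h3 : Module.finrank F (LinearMap.range π) = Module.finrank F HB := by omega
    have h4 : LinearMap.range π = ⊤ := Submodule.eq_top_of_finrank_eq h3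
    -- lift the identity
    have hone : (fun j => (1 : Matrix (Fin (q j)) (Fin (q j)) F)) ∈ HB := fun i => by simp
    obtain ⟨φ, hφ⟩ := LinearMap.range_eq_top.mp h4 ⟨fun j => 1, hone⟩
    have hv : ∀ j, (φ.1 j).toRows₂ = 1 :=
      fun j => congrFun (congrArg Subtype.val hφ) j
    set u : ∀ j, Matrix (Fin (p j)) (Fin (q j)) F := fun j => (φ.1 j).toRows₁ with hu
    have htop : ∀ i, A i * u (f i) + C i = u (g i) * B i := fun i => by
      have h := ((splitN i φ.1).mp (mem_homS.mp φ.2 i)).1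
      rwa [hv (f i), Matrix.mul_one] at h
    refine ⟨fun j => -(u j), fun i => ?_⟩
    calc A i * -(u (f i)) - -(u (g i)) * B i
        = -(A i * u (f i)) + u (g i) * B i := by
          rw [Matrix.mul_neg, Matrix.neg_mul, sub_neg_eq_add]
      _ = -(A i * u (f i)) + (A i * u (f i) + C i) := by rw [htop i]
      _ = C i := neg_add_cancel_left _ _
end

section
/- Let F be a field with an involutory automorphism ∁. A system A_i X_{i'}^{α_i} - X_{i''}^{β_i} B_i = C_i (i = 1,…,s), where each α_i, β_i ∈ {id, ∁} acts entrywise on matrices, has a solution in unknown matrices X_1,…,X_t if and only if there exist invertible matrices P_1,…,P_t with [[A_i, 0],[0, B_i]] · P_{i'}^{α_i} = P_{i''}^{β_i} · [[A_i, C_i],[0, B_i]] for all i. -/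
open Matrix

/-- Apply a field map entrywise to a matrix if the Boolean flag is `true`. -/
def condMap {F : Type*} (σ : F → F) {m n : Type*} (b : Bool) (M : Matrix m n F) :
    Matrix m n F :=
  if b then M.map σ else M

namespace RothAux

open Matrix FiniteDimensional Module

variable {F : Type*} [Field F]

section CondMapLemmas

variable (σ : F ≃+* F) {m n k : Type*}

theorem condMap_add (b : Bool) (M N : Matrix m n F) :
    condMap (⇑σ) b (M + N) = condMap (⇑σ) b M + condMap (⇑σ) b N := by
  cases b <;> ext i j <;> simp [condMap]

theorem condMap_smul (K : Subfield F) (hfix : ∀ c : K, σ c = c) (b : Bool) (c : K)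
    (M : Matrix m n F) : condMap (⇑σ) b (c • M) = c • condMap (⇑σ) b M := by
  cases b <;> ext i j <;>
    simp [condMap, Matrix.smul_apply, Subfield.smul_def, hfix c]

theorem condMap_mul [Fintype n] (b : Bool) (M : Matrix m n F) (N : Matrix n k F) :
    condMap (⇑σ) b (M * N) = condMap (⇑σ) b M * condMap (⇑σ) b N := by
  cases b
  · simp [condMap]
  · simp only [condMap, if_pos]
    exact Matrix.map_mul (f := (σ : F →+* F))

theorem condMap_one [DecidableEq n] (b : Bool) :
    condMap (⇑σ) b (1 : Matrix n n F) = 1 := by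
  cases b
  · simp [condMap]
  · simp only [condMap, if_pos]
    exact Matrix.map_one _ (map_zero σ) (map_one σ)

theorem condMap_zero (b : Bool) : condMap (⇑σ) b (0 : Matrix m n F) = 0 := by
  cases b <;> ext i j <;> simp [condMap]

theorem condMap_fromBlocks {n' m' : Type*} (b : Bool)
    (M₁₁ : Matrix m n F) (M₁₂ : Matrix m n' F) (M₂₁ : Matrix m' n F) (M₂₂ : Matrix m' n' F) :
    condMap (⇑σ) b (fromBlocks M₁₁ M₁₂ M₂₁ M₂₂) =
      fromBlocks (condMap (⇑σ) b M₁₁) (condMap (⇑σ) b M₁₂)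
        (condMap (⇑σ) b M₂₁) (condMap (⇑σ) b M₂₂) := by
  cases b <;> simp [condMap, Matrix.fromBlocks_map]

end CondMapLemmas

section RankNullity

variable {K M M' : Type*} [Field K] [AddCommGroup M] [Module K M]
  [AddCommGroup M'] [Module K M']

theorem finrank_map_add_finrank_inf_ker [FiniteDimensional K M]
    (π : M →ₗ[K] M') (V : Submodule K M) :
    finrank K (V.map π) + finrank K (V ⊓ LinearMap.ker π : Submodule K M) = finrank K V := by
  have h := LinearMap.finrank_range_add_finrank_ker (π.comp V.subtype)
  have hrange : LinearMap.range (π.comp V.subtype) = V.map π := by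
    rw [LinearMap.range_comp, Submodule.range_subtype]
  have hker : LinearMap.ker (π.comp V.subtype)
      = Submodule.comap V.subtype (V ⊓ LinearMap.ker π) := by
    rw [LinearMap.ker_comp]
    ext x
    simp [x.2]
  rw [hrange, hker] at h
  rwa [(Submodule.comapSubtypeEquivOfLe
    (inf_le_left : V ⊓ LinearMap.ker π ≤ V)).finrank_eq] at h

/-- Wimmer-style dimension-count lemma. -/
theorem wimmer [FiniteDimensional K M] [FiniteDimensional K M']
    {M₂ : Type*} [AddCommGroup M₂] [Module K M₂]
    (L L' : M →ₗ[K] M₂) (π : M →ₗ[K] M') (e : M ≃ₗ[K] M)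
    (he : (LinearMap.ker L').map (e : M →ₗ[K] M) ≤ LinearMap.ker L)
    (hker : LinearMap.ker L ⊓ LinearMap.ker π = LinearMap.ker L' ⊓ LinearMap.ker π)
    (hle : (LinearMap.ker L).map π ≤ (LinearMap.ker L').map π) :
    (LinearMap.ker L').map π ≤ (LinearMap.ker L).map π := by
  have h1 := finrank_map_add_finrank_inf_ker π (LinearMap.ker L)
  have h2 := finrank_map_add_finrank_inf_ker π (LinearMap.ker L')
  rw [hker] at h1
  have h3 : finrank K (LinearMap.ker L') ≤ finrank K (LinearMap.ker L) := by
    rw [← LinearEquiv.finrank_map_eq e (LinearMap.ker L')]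
    exact Submodule.finrank_mono he
  have h4 : finrank K ((LinearMap.ker L').map π) ≤ finrank K ((LinearMap.ker L).map π) := by
    omega
  exact (Submodule.eq_of_le_of_finrank_le hle h4).ge

end RankNullity

section System

variable (σ : F ≃+* F) (K : Subfield F) (hfix : ∀ c : K, σ c = c)
  {s t : ℕ} (p q : Fin t → ℕ) (f g : Fin s → Fin t) (α β : Fin s → Bool)

/-- The linear map `Z ↦ (D i * Z_{f i}^{α i} - Z_{g i}^{β i} * E i)_i`. -/
def sysMap (D E : ∀ i : Fin s,
    Matrix (Fin (p (g i)) ⊕ Fin (q (g i))) (Fin (p (f i)) ⊕ Fin (q (f i))) F) :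
    (∀ j : Fin t, Matrix (Fin (p j) ⊕ Fin (q j)) (Fin (p j) ⊕ Fin (q j)) F) →ₗ[K]
    (∀ i : Fin s, Matrix (Fin (p (g i)) ⊕ Fin (q (g i))) (Fin (p (f i)) ⊕ Fin (q (f i))) F) where
  toFun Z i := D i * condMap (⇑σ) (α i) (Z (f i)) - condMap (⇑σ) (β i) (Z (g i)) * E i
  map_add' Z W := by
    funext i
    simp only [Pi.add_apply, condMap_add, Matrix.mul_add, Matrix.add_mul]
    abel
  map_smul' c Z := by
    funext i
    simp only [Pi.smul_apply, condMap_smul σ K hfix, Matrix.mul_smul, Matrix.smul_mul,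
      smul_sub, RingHom.id_apply]

theorem mem_ker_sysMap (D E : ∀ i : Fin s,
    Matrix (Fin (p (g i)) ⊕ Fin (q (g i))) (Fin (p (f i)) ⊕ Fin (q (f i))) F)
    (Z : ∀ j : Fin t, Matrix (Fin (p j) ⊕ Fin (q j)) (Fin (p j) ⊕ Fin (q j)) F) :
    Z ∈ LinearMap.ker (sysMap σ K hfix p q f g α β D E) ↔
      ∀ i, D i * condMap (⇑σ) (α i) (Z (f i)) = condMap (⇑σ) (β i) (Z (g i)) * E i := by
  simp [sysMap, LinearMap.mem_ker, LinearMap.coe_mk, funext_iff, sub_eq_zero]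

/-- The "first block column" linear map. -/
def colMap :
    (∀ j : Fin t, Matrix (Fin (p j) ⊕ Fin (q j)) (Fin (p j) ⊕ Fin (q j)) F) →ₗ[K]
    (∀ j : Fin t, Matrix (Fin (p j)) (Fin (p j)) F × Matrix (Fin (q j)) (Fin (p j)) F) where
  toFun Z j := ((Z j).toBlocks₁₁, (Z j).toBlocks₂₁)
  map_add' Z W := rfl
  map_smul' c Z := rfl

@[simp] theorem colMap_apply
    (Z : ∀ j : Fin t, Matrix (Fin (p j) ⊕ Fin (q j)) (Fin (p j) ⊕ Fin (q j)) F) (j : Fin t) :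
    colMap K p q Z j = ((Z j).toBlocks₁₁, (Z j).toBlocks₂₁) := rfl

/-- Right multiplication by a tuple of invertible matrices, as a linear equivalence. -/
noncomputable def rmulEquiv (P : ∀ j : Fin t, Matrix (Fin (p j) ⊕ Fin (q j)) (Fin (p j) ⊕ Fin (q j)) F)
    (hP : ∀ j, IsUnit (P j).det) :
    (∀ j : Fin t, Matrix (Fin (p j) ⊕ Fin (q j)) (Fin (p j) ⊕ Fin (q j)) F) ≃ₗ[K]
    (∀ j : Fin t, Matrix (Fin (p j) ⊕ Fin (q j)) (Fin (p j) ⊕ Fin (q j)) F) where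
  toFun Z j := Z j * P j
  invFun Z j := Z j * (P j)⁻¹
  map_add' Z W := by
    funext j
    show (Z j + W j) * P j = Z j * P j + W j * P j
    exact Matrix.add_mul _ _ _
  map_smul' c Z := by
    funext j
    show (c • Z j) * P j = c • (Z j * P j)
    exact Matrix.smul_mul _ _ _
  left_inv Z := by funext j; exact Matrix.mul_nonsing_inv_cancel_right _ _ (hP j)
  right_inv Z := by funext j; exact Matrix.nonsing_inv_mul_cancel_right _ _ (hP j)

@[simp] theorem rmulEquiv_apply
    (P : ∀ j : Fin t, Matrix (Fin (p j) ⊕ Fin (q j)) (Fin (p j) ⊕ Fin (q j)) F)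
    (hP : ∀ j, IsUnit (P j).det)
    (Z : ∀ j : Fin t, Matrix (Fin (p j) ⊕ Fin (q j)) (Fin (p j) ⊕ Fin (q j)) F) (j : Fin t) :
    rmulEquiv K p q P hP Z j = Z j * P j := rfl

end System

theorem toBlocks₁₁_one {a b : Type*} [DecidableEq a] [DecidableEq b] :
    (1 : Matrix (a ⊕ b) (a ⊕ b) F).toBlocks₁₁ = 1 := by
  rw [← Matrix.fromBlocks_one (l := a) (m := b) (α := F), Matrix.toBlocks_fromBlocks₁₁]

theorem toBlocks₂₁_one {a b : Type*} [DecidableEq a] [DecidableEq b] :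
    (1 : Matrix (a ⊕ b) (a ⊕ b) F).toBlocks₂₁ = 0 := by
  rw [← Matrix.fromBlocks_one (l := a) (m := b) (α := F), Matrix.toBlocks_fromBlocks₂₁]

end RothAux

open RothAux

/-- Lemma 1 of the paper: the system `A_i X_{f i}^{α_i} - X_{g i}^{β_i} B_i = C_i`,
where each `α_i, β_i ∈ {id, ∁}` for an involutory automorphism `∁` of `F`, is solvable
iff there are invertible `P_1, …, P_t` with
`[[A_i,0],[0,B_i]] P_{f i}^{α_i} = P_{g i}^{β_i} [[A_i,C_i],[0,B_i]]` for all `i`. -/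
theorem roth_system_aut {F : Type*} [Field F] (σ : F ≃+* F)
    (hσ : ∀ a, σ (σ a) = a) {s t : ℕ}
    (p q : Fin t → ℕ) (f g : Fin s → Fin t) (α β : Fin s → Bool)
    (A : ∀ i : Fin s, Matrix (Fin (p (g i))) (Fin (p (f i))) F)
    (B : ∀ i : Fin s, Matrix (Fin (q (g i))) (Fin (q (f i))) F)
    (C : ∀ i : Fin s, Matrix (Fin (p (g i))) (Fin (q (f i))) F) :
    (∃ X : ∀ j : Fin t, Matrix (Fin (p j)) (Fin (q j)) F,
        ∀ i, A i * condMap σ (α i) (X (f i)) - condMap σ (β i) (X (g i)) * B i = C i) ↔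
      ∃ P : ∀ j : Fin t, Matrix (Fin (p j) ⊕ Fin (q j)) (Fin (p j) ⊕ Fin (q j)) F,
        (∀ j, IsUnit (P j)) ∧
        ∀ i, fromBlocks (A i) 0 0 (B i) * condMap σ (α i) (P (f i))
              = condMap σ (β i) (P (g i)) * fromBlocks (A i) (C i) 0 (B i) := by
  constructor
  · rintro ⟨X, hX⟩
    refine ⟨fun j => fromBlocks 1 (X j) 0 1, fun j => ?_, fun i => ?_⟩
    · rw [Matrix.isUnit_iff_isUnit_det, Matrix.det_fromBlocks_zero₂₁]
      simp
    · have h := sub_eq_iff_eq_add.1 (hX i)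
      rw [condMap_fromBlocks, condMap_fromBlocks, condMap_one, condMap_one, condMap_zero,
        condMap_zero, fromBlocks_multiply, fromBlocks_multiply]
      simp only [condMap_one, Matrix.mul_one, Matrix.one_mul, Matrix.mul_zero, Matrix.zero_mul,
        add_zero, zero_add]
      rw [h]
  · rintro ⟨P, hPu, hP⟩
    classical
    -- the fixed subfield
    have hσ2 : σ * σ = 1 := by
      ext a
      exact hσ a
    have hord : IsOfFinOrder σ :=
      isOfFinOrder_iff_pow_eq_one.2 ⟨2, by norm_num, by rw [pow_two]; exact hσ2⟩
    haveI hGfin : Finite (Subgroup.zpowers σ) := hord.finite_zpowers.to_subtype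
    set K : Subfield F := FixedPoints.subfield (Subgroup.zpowers σ) F with hK
    haveI : FiniteDimensional K F := by
      rw [hK]; infer_instance
    have hfix : ∀ c : K, σ c = c := by
      intro c
      have hc : (c : F) ∈ MulAction.fixedPoints (Subgroup.zpowers σ) F := c.2
      exact hc ⟨σ, Subgroup.mem_zpowers σ⟩
    have hPd : ∀ j, IsUnit (P j).det := fun j => (Matrix.isUnit_iff_isUnit_det _).1 (hPu j)
    set LE := sysMap σ K hfix p q f g α β (fun i => fromBlocks (A i) 0 0 (B i))
      (fun i => fromBlocks (A i) (C i) 0 (B i)) with hLE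
    set LD := sysMap σ K hfix p q f g α β (fun i => fromBlocks (A i) 0 0 (B i))
      (fun i => fromBlocks (A i) 0 0 (B i)) with hLD
    have memE : ∀ Z, Z ∈ LinearMap.ker LE ↔ ∀ i,
        fromBlocks (A i) 0 0 (B i) * condMap (⇑σ) (α i) (Z (f i))
          = condMap (⇑σ) (β i) (Z (g i)) * fromBlocks (A i) (C i) 0 (B i) := fun Z =>
      mem_ker_sysMap σ K hfix p q f g α β _ _ Z
    have memD : ∀ Z, Z ∈ LinearMap.ker LD ↔ ∀ i,
        fromBlocks (A i) 0 0 (B i) * condMap (⇑σ) (α i) (Z (f i))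
          = condMap (⇑σ) (β i) (Z (g i)) * fromBlocks (A i) 0 0 (B i) := fun Z =>
      mem_ker_sysMap σ K hfix p q f g α β _ _ Z
    -- hypothesis `he` of `wimmer`
    have he : (LinearMap.ker LD).map (rmulEquiv K p q P hPd : _ →ₗ[K] _)
        ≤ LinearMap.ker LE := by
      rintro Z' hZ'
      obtain ⟨Z, hZ, rfl⟩ := Submodule.mem_map.1 hZ'
      rw [memD] at hZ
      rw [memE]
      intro i
      show fromBlocks (A i) 0 0 (B i) * condMap (⇑σ) (α i) (Z (f i) * P (f i))
          = condMap (⇑σ) (β i) (Z (g i) * P (g i)) * fromBlocks (A i) (C i) 0 (B i)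
      rw [condMap_mul, condMap_mul, ← Matrix.mul_assoc, hZ i, Matrix.mul_assoc, hP i,
        ← Matrix.mul_assoc]
    -- hypothesis `hker` of `wimmer`
    have hED : ∀ Z, colMap K p q Z = 0 → LE Z = LD Z := by
      intro Z hZ0
      funext i
      have h11 : (Z (g i)).toBlocks₁₁ = 0 := congrArg Prod.fst (congrFun hZ0 (g i))
      have h21 : (Z (g i)).toBlocks₂₁ = 0 := congrArg Prod.snd (congrFun hZ0 (g i))
      show fromBlocks (A i) 0 0 (B i) * condMap (⇑σ) (α i) (Z (f i))
            - condMap (⇑σ) (β i) (Z (g i)) * fromBlocks (A i) (C i) 0 (B i)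
          = fromBlocks (A i) 0 0 (B i) * condMap (⇑σ) (α i) (Z (f i))
            - condMap (⇑σ) (β i) (Z (g i)) * fromBlocks (A i) 0 0 (B i)
      have hmul : condMap (⇑σ) (β i) (Z (g i)) * fromBlocks (A i) (C i) 0 (B i)
          = condMap (⇑σ) (β i) (Z (g i)) * fromBlocks (A i) 0 0 (B i) := by
        conv_lhs => rw [← fromBlocks_toBlocks (Z (g i)), h11, h21]
        conv_rhs => rw [← fromBlocks_toBlocks (Z (g i)), h11, h21]
        rw [condMap_fromBlocks, fromBlocks_multiply, fromBlocks_multiply]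
        simp [condMap_zero]
      rw [hmul]
    have hker : LinearMap.ker LE ⊓ LinearMap.ker (colMap K p q)
        = LinearMap.ker LD ⊓ LinearMap.ker (colMap K p q) := by
      ext Z
      simp only [Submodule.mem_inf, LinearMap.mem_ker]
      constructor <;> rintro ⟨h1, h2⟩ <;> refine ⟨?_, h2⟩
      · rw [← hED Z h2]; exact h1
      · rw [hED Z h2]; exact h1
    -- hypothesis `hle` of `wimmer`
    have hle : (LinearMap.ker LE).map (colMap K p q)
        ≤ (LinearMap.ker LD).map (colMap K p q) := by
      rintro y hy
      obtain ⟨Z, hZ, rfl⟩ := Submodule.mem_map.1 hy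
      rw [memE] at hZ
      refine Submodule.mem_map.2
        ⟨fun j => fromBlocks (Z j).toBlocks₁₁ 0 (Z j).toBlocks₂₁ 0, ?_, ?_⟩
      · rw [memD]
        intro i
        have h := hZ i
        rw [← fromBlocks_toBlocks (Z (f i)), ← fromBlocks_toBlocks (Z (g i)),
          condMap_fromBlocks, condMap_fromBlocks, fromBlocks_multiply, fromBlocks_multiply] at h
        obtain ⟨h11, -, h21, -⟩ := fromBlocks_inj.1 h
        simp only [Matrix.zero_mul, Matrix.mul_zero, add_zero, zero_add] at h11 h21
        rw [condMap_fromBlocks, condMap_fromBlocks, condMap_zero, condMap_zero,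
          fromBlocks_multiply, fromBlocks_multiply]
        simp [condMap_zero, h11, h21]
      · funext j
        rw [colMap_apply, colMap_apply]
        rw [Matrix.toBlocks_fromBlocks₁₁, Matrix.toBlocks_fromBlocks₂₁]
    -- the identity tuple lies in `ker LD`
    have hone : (fun j => (1 : Matrix (Fin (p j) ⊕ Fin (q j)) (Fin (p j) ⊕ Fin (q j)) F))
        ∈ LinearMap.ker LD := by
      rw [memD]
      intro i
      rw [condMap_one, condMap_one, Matrix.one_mul, Matrix.mul_one]
    have hsub := wimmer LE LD (colMap K p q) (rmulEquiv K p q P hPd) he hker hle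
    obtain ⟨Z, hZker, hπZ⟩ := Submodule.mem_map.1 (hsub (Submodule.mem_map_of_mem hone))
    have hbl : ∀ j, (Z j).toBlocks₁₁ = 1 ∧ (Z j).toBlocks₂₁ = 0 := by
      intro j
      have h := congrFun hπZ j
      rw [colMap_apply, colMap_apply] at h
      have h1 := congrArg Prod.fst h
      have h2 := congrArg Prod.snd h
      dsimp only at h1 h2
      rw [toBlocks₁₁_one] at h1
      rw [toBlocks₂₁_one] at h2
      exact ⟨h1, h2⟩
    refine ⟨fun j => (Z j).toBlocks₁₂, fun i => ?_⟩
    have hE := (memE Z).1 hZker i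
    rw [← fromBlocks_toBlocks (Z (f i)), ← fromBlocks_toBlocks (Z (g i)), (hbl (f i)).1,
      (hbl (f i)).2, (hbl (g i)).1, (hbl (g i)).2, condMap_fromBlocks, condMap_fromBlocks,
      condMap_one, condMap_one, condMap_zero, condMap_zero, fromBlocks_multiply,
      fromBlocks_multiply] at hE
    obtain ⟨-, h12, -, -⟩ := fromBlocks_inj.1 hE
    simp only [Matrix.zero_mul, Matrix.mul_zero, add_zero, zero_add, Matrix.one_mul,
      Matrix.mul_one] at h12
    exact sub_eq_iff_eq_add.2 h12
end

section
/- The system of generalized Sylvester equations A_i X_{i'} M_i - N_i X_{i''} B_i = C_i (i = 1,…,s) over a field has a solution if and only if there exist invertible matrices P_1,…,P_t, Q_1,…,Q_s, R_1,…,R_s satisfying, for each i: [[A_i,0],[0,B_i]]Q_i = R_i[[A_i,C_i],[0,B_i]], [[I,0],[0,M_i]]Q_i = P_{i'}[[I,0],[0,M_i]], and [[N_i,0],[0,I]]P_{i''} = R_i[[N_i,0],[0,I]]. -/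
/-!
The block-unipotent matrices `[[I, X], [0, I]]` built from a solution `X` satisfy the equations.
Conversely, let `V(C₁, C₂)` be the space of tuples `(P, Q, R)` satisfying the equations with
`[[A, C₁], [0, B]]` on the left and `[[A, C₂], [0, B]]` on the right. These spaces compose like a
groupoid under componentwise multiplication, so right multiplication by an invertible
`g ∈ V(0, C)` maps `V(0, 0)` isomorphically onto `V(0, C)`. Right multiplication by the
idempotent `E = diag(I, 0)` has the same kernel on both spaces and maps `V(0, C)` into the image
of `V(0, 0)`; by the dimension count the two images coincide. Since `1 ∈ V(0, 0)`, some
`z ∈ V(0, C)` has `z E = E`: the top-left blocks of the `R`-components of `z` are identities,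
and then the top-right blocks of its `P`-components solve the system.
-/

open Matrix Module

namespace Submodule

variable {K V W : Type*} [Field K] [AddCommGroup V] [Module K V] [AddCommGroup W] [Module K W]
  [FiniteDimensional K V]

theorem finrank_map_add_finrank_ker_inf (φ : V →ₗ[K] W) (U : Submodule K V) :
    finrank K (U.map φ) + finrank K (LinearMap.ker φ ⊓ U : Submodule K V) = finrank K U := by
  rw [← LinearMap.range_domRestrict, inf_comm, ← map_comap_subtype, finrank_map_subtype_eq,
    ← LinearMap.ker_domRestrict]
  exact LinearMap.finrank_range_add_finrank_ker _

theorem map_eq_of_finrank_eq_of_ker_inf_eq (φ : V →ₗ[K] W) {U₀ U₁ : Submodule K V}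
    (hrank : finrank K U₀ = finrank K U₁)
    (hker : LinearMap.ker φ ⊓ U₀ = LinearMap.ker φ ⊓ U₁) (hle : U₁.map φ ≤ U₀.map φ) :
    U₁.map φ = U₀.map φ := by
  refine eq_of_le_of_finrank_eq hle ?_
  have h₀ := finrank_map_add_finrank_ker_inf φ U₀
  have h₁ := finrank_map_add_finrank_ker_inf φ U₁
  rw [hker] at h₀
  omega

end Submodule

namespace Matrix

variable {R : Type*} [Semiring R]

section Intertwine

variable {l m : Type*} [Fintype l] [Fintype m] {L₁ L₂ L₃ : Matrix l m R}

theorem intertwine_mul {x x' : Matrix m m R} {y y' : Matrix l l R}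
    (h : L₁ * x = y * L₂) (h' : L₂ * x' = y' * L₃) : L₁ * (x * x') = y * y' * L₃ := by
  rw [← Matrix.mul_assoc, h, Matrix.mul_assoc, h', Matrix.mul_assoc]

theorem intertwine_inv [DecidableEq l] [DecidableEq m] {x x' : Matrix m m R} {y y' : Matrix l l R}
    (h : L₁ * x = y * L₂) (hx : x * x' = 1) (hy : y' * y = 1) : L₂ * x' = y' * L₁ := by
  rw [← Matrix.one_mul (L₂ * x'), ← hy, Matrix.mul_assoc, ← Matrix.mul_assoc y, ← h,
    Matrix.mul_assoc, hx, Matrix.mul_one]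

end Intertwine

variable {l m n o k r : Type*}

theorem toBlocks₁₁_mul [Fintype m] [Fintype n] (X : Matrix (l ⊕ k) (m ⊕ n) R)
    (Y : Matrix (m ⊕ n) (o ⊕ r) R) :
    (X * Y).toBlocks₁₁ = X.toBlocks₁₁ * Y.toBlocks₁₁ + X.toBlocks₁₂ * Y.toBlocks₂₁ := by
  ext i j
  simp [toBlocks₁₁, toBlocks₁₂, toBlocks₂₁, Matrix.mul_apply, Fintype.sum_sum_type]

theorem toBlocks₁₂_mul [Fintype m] [Fintype n] (X : Matrix (l ⊕ k) (m ⊕ n) R)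
    (Y : Matrix (m ⊕ n) (o ⊕ r) R) :
    (X * Y).toBlocks₁₂ = X.toBlocks₁₁ * Y.toBlocks₁₂ + X.toBlocks₁₂ * Y.toBlocks₂₂ := by
  ext i j
  simp [toBlocks₁₁, toBlocks₁₂, toBlocks₂₂, Matrix.mul_apply, Fintype.sum_sum_type]

theorem mul_fromBlocks_eq_of_mul_fromBlocks_one_eq_zero [Fintype m] [Fintype n] [DecidableEq m]
    {L : Matrix l (m ⊕ n) R} (hL : L * fromBlocks (1 : Matrix m m R) 0 0 (0 : Matrix n n R) = 0)
    (A A' : Matrix m o R) (B B' : Matrix m r R) (C : Matrix n o R) (D : Matrix n r R) :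
    L * fromBlocks A B C D = L * fromBlocks A' B' C D := by
  have hcol (i : l) (x : m) : L i (Sum.inl x) = 0 := by
    simpa [Matrix.mul_apply, Fintype.sum_sum_type, one_apply] using
      congrFun (congrFun hL i) (.inl x)
  ext i (j | j) <;> simp [Matrix.mul_apply, Fintype.sum_sum_type, hcol]

end Matrix

namespace GeneralizedSylvester

variable {F : Type*} [Field F] {s t : ℕ} {a b : Fin s → ℕ} {p q : Fin t → ℕ} {f g : Fin s → Fin t}

variable (F a b p q f g) in
abbrev BlockTuple : Type _ :=
  (∀ j : Fin t, Matrix (Fin (p j) ⊕ Fin (q j)) (Fin (p j) ⊕ Fin (q j)) F) ×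
  (∀ i : Fin s, Matrix (Fin (p (f i)) ⊕ Fin (b i)) (Fin (p (f i)) ⊕ Fin (b i)) F) ×
  (∀ i : Fin s, Matrix (Fin (a i) ⊕ Fin (q (g i))) (Fin (a i) ⊕ Fin (q (g i))) F)

variable (A : ∀ i : Fin s, Matrix (Fin (a i)) (Fin (p (f i))) F)
    (M : ∀ i : Fin s, Matrix (Fin (q (f i))) (Fin (b i)) F)
    (N : ∀ i : Fin s, Matrix (Fin (a i)) (Fin (p (g i))) F)
    (B : ∀ i : Fin s, Matrix (Fin (q (g i))) (Fin (b i)) F)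

-- The ascriptions on `1` make `*` elaborate as `Matrix` multiplication rather than through
-- `CStarMatrix`; the conditions of the theorem are then `(P, Q, R) ∈ rothSpace A M N B 0 C`.
def rothSpace (C₁ C₂ : ∀ i : Fin s, Matrix (Fin (a i)) (Fin (b i)) F) :
    Submodule F (BlockTuple F a b p q f g) where
  carrier := {z | ∀ i,
    fromBlocks (A i) (C₁ i) 0 (B i) * z.2.1 i = z.2.2 i * fromBlocks (A i) (C₂ i) 0 (B i) ∧
    fromBlocks (1 : Matrix (Fin (p (f i))) (Fin (p (f i))) F) 0 0 (M i) * z.2.1 i =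
      z.1 (f i) * fromBlocks (1 : Matrix (Fin (p (f i))) (Fin (p (f i))) F) 0 0 (M i) ∧
    fromBlocks (N i) 0 0 (1 : Matrix (Fin (q (g i))) (Fin (q (g i))) F) * z.1 (g i) =
      z.2.2 i * fromBlocks (N i) 0 0 (1 : Matrix (Fin (q (g i))) (Fin (q (g i))) F)}
  zero_mem' i := by simp
  add_mem' hz hw i := by
    simp [Matrix.mul_add, Matrix.add_mul, hz i, hw i]
  smul_mem' c z hz i := by
    simp [hz i]

variable {A M N B} {C C₁ C₂ C₃ : ∀ i : Fin s, Matrix (Fin (a i)) (Fin (b i)) F}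

theorem mul_mem_rothSpace {z w : BlockTuple F a b p q f g} (hz : z ∈ rothSpace A M N B C₁ C₂)
    (hw : w ∈ rothSpace A M N B C₂ C₃) : z * w ∈ rothSpace A M N B C₁ C₃ := fun i =>
  ⟨intertwine_mul (hz i).1 (hw i).1, intertwine_mul (hz i).2.1 (hw i).2.1,
    intertwine_mul (hz i).2.2 (hw i).2.2⟩

theorem one_mem_rothSpace : (1 : BlockTuple F a b p q f g) ∈ rothSpace A M N B C₁ C₁ := fun i => by
  simp

theorem inv_mem_rothSpace {u : (BlockTuple F a b p q f g)ˣ} (hu : ↑u ∈ rothSpace A M N B C₁ C₂) :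
    ↑u⁻¹ ∈ rothSpace A M N B C₂ C₁ := by
  have hl := u.inv_mul
  have hr := u.mul_inv
  simp only [Prod.ext_iff, funext_iff] at hl hr
  exact fun i => ⟨intertwine_inv (hu i).1 (hr.2.1 i) (hl.2.2 i),
    intertwine_inv (hu i).2.1 (hr.2.1 i) (hl.1 (f i)),
    intertwine_inv (hu i).2.2 (hr.1 (g i)) (hl.2.2 i)⟩

theorem map_mulRight_rothSpace {u : (BlockTuple F a b p q f g)ˣ}
    (hu : ↑u ∈ rothSpace A M N B C₂ C₃) :
    (rothSpace A M N B C₁ C₂).map (u.mulRightLinearEquiv F : _ →ₗ[F] _) =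
      rothSpace A M N B C₁ C₃ := by
  refine le_antisymm ?_ fun z hz => ⟨z * ↑u⁻¹, mul_mem_rothSpace hz (inv_mem_rothSpace hu), ?_⟩
  · rintro _ ⟨z, hz, rfl⟩
    exact mul_mem_rothSpace hz hu
  · simp [mul_assoc]

variable (F a b p q f g) in
def corner : BlockTuple F a b p q f g :=
  (fun _ => fromBlocks 1 0 0 0, fun _ => fromBlocks 1 0 0 0, fun _ => fromBlocks 1 0 0 0)

theorem corner_mul_corner : corner F a b p q f g * corner F a b p q f g = corner F a b p q f g := by
  simp [corner, Prod.ext_iff, funext_iff, fromBlocks_multiply]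

theorem corner_mem_rothSpace : corner F a b p q f g ∈ rothSpace A M N B C₁ 0 := fun i => by
  simp [corner, fromBlocks_multiply]

theorem mem_rothSpace_iff_of_mul_corner_eq_zero {z : BlockTuple F a b p q f g}
    (hz : z * corner F a b p q f g = 0) :
    z ∈ rothSpace A M N B C₁ C₂ ↔ z ∈ rothSpace A M N B C₁ C₃ := by
  have hR (i : Fin s) :
      z.2.2 i * fromBlocks (A i) (C₂ i) 0 (B i) = z.2.2 i * fromBlocks (A i) (C₃ i) 0 (B i) :=
    mul_fromBlocks_eq_of_mul_fromBlocks_one_eq_zero (congrFun (congrArg (·.2.2) hz) i) _ _ _ _ _ _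
  exact forall_congr' fun i => by rw [hR i]

theorem ker_inf_rothSpace :
    LinearMap.ker (LinearMap.mulRight F (corner F a b p q f g)) ⊓ rothSpace A M N B C₁ C₂ =
      LinearMap.ker (LinearMap.mulRight F (corner F a b p q f g)) ⊓ rothSpace A M N B C₁ C₃ := by
  ext z
  simp only [Submodule.mem_inf, LinearMap.mem_ker, LinearMap.mulRight_apply]
  exact and_congr_right mem_rothSpace_iff_of_mul_corner_eq_zero

theorem exists_mem_rothSpace_mul_corner_eq_corner {u : (BlockTuple F a b p q f g)ˣ}
    (hu : ↑u ∈ rothSpace A M N B 0 C) :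
    ∃ z ∈ rothSpace A M N B 0 C, z * corner F a b p q f g = corner F a b p q f g := by
  set φ := LinearMap.mulRight F (corner F a b p q f g)
  have hle : (rothSpace A M N B 0 C).map φ ≤ (rothSpace A M N B 0 0).map φ := by
    rintro _ ⟨z, hz, rfl⟩
    refine ⟨z * corner F a b p q f g, mul_mem_rothSpace hz corner_mem_rothSpace, ?_⟩
    simp [φ, mul_assoc, corner_mul_corner]
  have hmap := Submodule.map_eq_of_finrank_eq_of_ker_inf_eq φ
    (by rw [← map_mulRight_rothSpace hu, LinearEquiv.finrank_map_eq]) ker_inf_rothSpace hle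
  obtain ⟨z, hz, hzφ⟩ : φ 1 ∈ (rothSpace A M N B 0 C).map φ :=
    hmap ▸ Submodule.mem_map_of_mem one_mem_rothSpace
  exact ⟨z, hz, by simpa [φ] using hzφ⟩

theorem exists_solution_of_mem_rothSpace {z : BlockTuple F a b p q f g}
    (hz : z ∈ rothSpace A M N B 0 C)
    (hcorner : z * corner F a b p q f g = corner F a b p q f g) :
    ∃ X : ∀ j : Fin t, Matrix (Fin (p j)) (Fin (q j)) F,
      ∀ i, A i * X (f i) * M i - N i * X (g i) * B i = C i := by
  refine ⟨fun j => (z.1 j).toBlocks₁₂, fun i => ?_⟩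
  obtain ⟨hAB, hM, hN⟩ := hz i
  have hR₁₁ : (z.2.2 i).toBlocks₁₁ = 1 := by
    simpa [toBlocks₁₁_mul, corner] using congrArg toBlocks₁₁ (congrFun (congrArg (·.2.2) hcorner) i)
  have hQ₁₂ : (z.2.1 i).toBlocks₁₂ = (z.1 (f i)).toBlocks₁₂ * M i := by
    simpa [toBlocks₁₂_mul] using congrArg toBlocks₁₂ hM
  have hR₁₂ : N i * (z.1 (g i)).toBlocks₁₂ = (z.2.2 i).toBlocks₁₂ := by
    simpa [toBlocks₁₂_mul] using congrArg toBlocks₁₂ hN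
  have h := congrArg toBlocks₁₂ hAB
  simp only [Pi.zero_apply, toBlocks₁₂_mul, toBlocks_fromBlocks₁₁, toBlocks_fromBlocks₁₂,
    toBlocks_fromBlocks₂₂, Matrix.zero_mul, add_zero, hQ₁₂, hR₁₁, Matrix.one_mul, ← hR₁₂] at h
  rw [Matrix.mul_assoc, h, Matrix.mul_assoc]
  abel

theorem unipotent_mem_rothSpace {X : ∀ j : Fin t, Matrix (Fin (p j)) (Fin (q j)) F}
    (hX : ∀ i, A i * X (f i) * M i - N i * X (g i) * B i = C i) :
    ((fun j => fromBlocks 1 (X j) 0 1, fun i => fromBlocks 1 (X (f i) * M i) 0 1,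
      fun i => fromBlocks 1 (N i * X (g i)) 0 1) : BlockTuple F a b p q f g) ∈
      rothSpace A M N B 0 C := fun i => by
  have hC : C i + N i * (X (g i) * B i) = A i * (X (f i) * M i) := by
    rw [← hX i, Matrix.mul_assoc, Matrix.mul_assoc, sub_add_cancel]
  simp [fromBlocks_multiply, Matrix.mul_assoc, hC]

end GeneralizedSylvester

/-- Theorem 3 of the paper (identity case): the system
`A_i X_{f i} M_i - N_i X_{g i} B_i = C_i` is solvable iff there exist invertible
matrices `P_1,…,P_t, Q_1,…,Q_s, R_1,…,R_s` satisfying the `3s` block equalities. -/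
theorem generalized_sylvester_roth {F : Type*} [Field F] {s t : ℕ}
    (a b : Fin s → ℕ) (p q : Fin t → ℕ) (f g : Fin s → Fin t)
    (A : ∀ i : Fin s, Matrix (Fin (a i)) (Fin (p (f i))) F)
    (M : ∀ i : Fin s, Matrix (Fin (q (f i))) (Fin (b i)) F)
    (N : ∀ i : Fin s, Matrix (Fin (a i)) (Fin (p (g i))) F)
    (B : ∀ i : Fin s, Matrix (Fin (q (g i))) (Fin (b i)) F)
    (C : ∀ i : Fin s, Matrix (Fin (a i)) (Fin (b i)) F) :
    (∃ X : ∀ j : Fin t, Matrix (Fin (p j)) (Fin (q j)) F,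
        ∀ i, A i * X (f i) * M i - N i * X (g i) * B i = C i) ↔
      ∃ (P : ∀ j : Fin t, Matrix (Fin (p j) ⊕ Fin (q j)) (Fin (p j) ⊕ Fin (q j)) F)
        (Q : ∀ i : Fin s, Matrix (Fin (p (f i)) ⊕ Fin (b i)) (Fin (p (f i)) ⊕ Fin (b i)) F)
        (R : ∀ i : Fin s, Matrix (Fin (a i) ⊕ Fin (q (g i))) (Fin (a i) ⊕ Fin (q (g i))) F),
        (∀ j, IsUnit (P j)) ∧ (∀ i, IsUnit (Q i)) ∧ (∀ i, IsUnit (R i)) ∧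
        ∀ i,
          fromBlocks (A i) 0 0 (B i) * Q i = R i * fromBlocks (A i) (C i) 0 (B i) ∧
          fromBlocks (1 : Matrix (Fin (p (f i))) (Fin (p (f i))) F) 0 0 (M i) * Q i
            = P (f i) * fromBlocks 1 0 0 (M i) ∧
          fromBlocks (N i) 0 0 (1 : Matrix (Fin (q (g i))) (Fin (q (g i))) F) * P (g i)
            = R i * fromBlocks (N i) 0 0 1 := by
  open GeneralizedSylvester in
  constructor
  · rintro ⟨X, hX⟩
    refine ⟨_, _, _, ?_, ?_, ?_, unipotent_mem_rothSpace hX⟩ <;> intro <;> simp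
  · rintro ⟨P, Q, R, hP, hQ, hR, h⟩
    have hunit : IsUnit ((P, Q, R) : BlockTuple F a b p q f g) := by
      simp only [Prod.isUnit_iff, Pi.isUnit_iff]
      exact ⟨hP, hQ, hR⟩
    obtain ⟨z, hz, hcorner⟩ := exists_mem_rothSpace_mul_corner_eq_corner (u := hunit.unit) h
    exact exists_solution_of_mem_rothSpace hz hcorner
end

section
/- Over a field F of characteristic not 2 with the transpose operation, the system A_i X_{i'}^{ε_i} - X_{i''}^{δ_i} B_i = C_i (i = 1,…,s), where each ε_i, δ_i ∈ {id, ⊤}, has a solution if and only if there exist invertible matrices P_1,…,P_t with [[A_i,0],[0,B_i]] · P_{i'}^{⟪ε_i⟫} = P_{i''}^{⟪δ_i⟫} · [[A_i,C_i],[0,B_i]] for all i, where P^{⟪id⟫} = P and P^{⟪⊤⟫} = J (P^⊤)⁻¹ J⁻¹ with J = [[0,I],[-I,0]]. -/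
open Matrix

/-- Transpose a square matrix if the Boolean flag is `true`. -/
def condTrans {F : Type*} {k : Type*} (b : Bool) (M : Matrix k k F) : Matrix k k F :=
  if b then Mᵀ else M

/-- The block matrix `J = [[0,I],[-I,0]]`. -/
def Jmat (F : Type*) [Field F] (k : ℕ) :
    Matrix (Fin k ⊕ Fin k) (Fin k ⊕ Fin k) F :=
  fromBlocks 0 1 (-1) 0

/-- `P^{⟪id⟫} = P` and `P^{⟪⊤⟫} = J (P^⊤)⁻¹ J⁻¹`. -/
noncomputable def angTrans {F : Type*} [Field F] {k : ℕ} (b : Bool)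
    (P : Matrix (Fin k ⊕ Fin k) (Fin k ⊕ Fin k) F) :
    Matrix (Fin k ⊕ Fin k) (Fin k ⊕ Fin k) F :=
  if b then Jmat F k * (Pᵀ)⁻¹ * (Jmat F k)⁻¹ else P

namespace RothAux

variable {F : Type*} [Field F]

lemma J_mul_J (k : ℕ) : Jmat F k * Jmat F k = -1 := by
  rw [Jmat, fromBlocks_multiply, ← fromBlocks_one (l := Fin k) (m := Fin k), fromBlocks_neg]
  simp

lemma J_mul_negJ (k : ℕ) : Jmat F k * (-Jmat F k) = 1 := by
  rw [mul_neg, J_mul_J, neg_neg]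

lemma J_inv (k : ℕ) : (Jmat F k)⁻¹ = -Jmat F k :=
  inv_eq_right_inv (J_mul_negJ k)

lemma isUnit_J_det (k : ℕ) : IsUnit (Jmat F k).det :=
  isUnit_det_of_right_inverse (J_mul_negJ k)

lemma J_transpose (k : ℕ) : (Jmat F k)ᵀ = -Jmat F k := by
  rw [Jmat, fromBlocks_transpose, fromBlocks_neg]
  simp

/-- conjugation by J -/
lemma J_conj {k l : ℕ} (a : Matrix (Fin l) (Fin k) F) (b : Matrix (Fin l) (Fin k) F)
    (c : Matrix (Fin l) (Fin k) F) (d : Matrix (Fin l) (Fin k) F) :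
    Jmat F l * fromBlocks a b c d * (Jmat F k)⁻¹ = fromBlocks d (-c) (-b) a := by
  rw [J_inv, Jmat, Jmat, fromBlocks_neg, fromBlocks_multiply, fromBlocks_multiply]
  simp

lemma angTrans_false {k : ℕ} (P : Matrix (Fin k ⊕ Fin k) (Fin k ⊕ Fin k) F) :
    angTrans false P = P := rfl

lemma angTrans_true {k : ℕ} (P : Matrix (Fin k ⊕ Fin k) (Fin k ⊕ Fin k) F) :
    angTrans true P = Jmat F k * (Pᵀ)⁻¹ * (Jmat F k)⁻¹ := rfl

lemma isUnit_angTrans {k : ℕ} (b : Bool) {P : Matrix (Fin k ⊕ Fin k) (Fin k ⊕ Fin k) F}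
    (h : IsUnit P) : IsUnit (angTrans b P) := by
  cases b
  · exact h
  · rw [angTrans_true]
    have hd : IsUnit P.det := (Matrix.isUnit_iff_isUnit_det _).1 h
    have hdT : IsUnit Pᵀ.det := by rwa [Matrix.det_transpose]
    have h1 : IsUnit (Pᵀ)⁻¹ := by
      exact (Matrix.isUnit_iff_isUnit_det _).2
        (isUnit_det_of_right_inverse (B := Pᵀ) (Matrix.nonsing_inv_mul _ hdT))
    have hJ : IsUnit (Jmat F k) :=
      (Matrix.isUnit_iff_isUnit_det _).2 (isUnit_J_det k)
    have hJi : IsUnit (Jmat F k)⁻¹ := by rw [J_inv]; exact hJ.neg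
    exact (hJ.mul h1).mul hJi

lemma angTrans_invol {k : ℕ} {P : Matrix (Fin k ⊕ Fin k) (Fin k ⊕ Fin k) F}
    (h : IsUnit P) : angTrans true (angTrans true P) = P := by
  have hd : IsUnit P.det := (Matrix.isUnit_iff_isUnit_det _).1 h
  have hdT : IsUnit Pᵀ.det := by rwa [Matrix.det_transpose]
  rw [angTrans_true, angTrans_true, J_inv]
  -- (J * Pᵀ⁻¹ * -J)ᵀ = J * P⁻¹ * -J
  have h1 : (Jmat F k * (Pᵀ)⁻¹ * (-Jmat F k))ᵀ = Jmat F k * P⁻¹ * (-Jmat F k) := by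
    rw [Matrix.transpose_mul, Matrix.transpose_mul, Matrix.transpose_neg, J_transpose, neg_neg,
      Matrix.transpose_nonsing_inv, Matrix.transpose_transpose, ← Matrix.mul_assoc]
  rw [h1]
  -- (J * P⁻¹ * -J)⁻¹ = J * P * -J  (since (-J)⁻¹ = J and J⁻¹ = -J)
  have hnegJ_inv : (-Jmat F k)⁻¹ = Jmat F k := by
    rw [← J_inv, Matrix.nonsing_inv_nonsing_inv _ (isUnit_J_det k)]
  have h2 : (Jmat F k * P⁻¹ * (-Jmat F k))⁻¹ = Jmat F k * P * (-Jmat F k) := by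
    rw [Matrix.mul_inv_rev, Matrix.mul_inv_rev, hnegJ_inv,
      Matrix.nonsing_inv_nonsing_inv _ hd, J_inv, Matrix.mul_assoc]
  rw [h2]
  calc Jmat F k * (Jmat F k * P * (-Jmat F k)) * (-Jmat F k)
      = (Jmat F k * Jmat F k) * P * ((-Jmat F k) * (-Jmat F k)) := by
        simp only [Matrix.mul_assoc]
    _ = (-1 : Matrix _ _ F) * P * (-1 : Matrix _ _ F) := by
        rw [J_mul_J, neg_mul_neg, J_mul_J]
    _ = P := by simp

lemma angTrans_not {k : ℕ} (b : Bool) {P : Matrix (Fin k ⊕ Fin k) (Fin k ⊕ Fin k) F}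
    (h : IsUnit P) : angTrans true (angTrans b P) = angTrans (!b) P := by
  cases b
  · rfl
  · exact angTrans_invol h

lemma flip_eq {a b : ℕ} {M N : Matrix (Fin b ⊕ Fin b) (Fin a ⊕ Fin a) F}
    {Qf : Matrix (Fin a ⊕ Fin a) (Fin a ⊕ Fin a) F}
    {Qg : Matrix (Fin b ⊕ Fin b) (Fin b ⊕ Fin b) F}
    (hf : IsUnit Qf) (hg : IsUnit Qg) (h : M * Qf = Qg * N) :
    (Jmat F a * Mᵀ * (Jmat F b)⁻¹) * angTrans true Qg
      = angTrans true Qf * (Jmat F a * Nᵀ * (Jmat F b)⁻¹) := by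
  have hfd : IsUnit (Qfᵀ).det := by
    rw [Matrix.det_transpose]; exact (Matrix.isUnit_iff_isUnit_det _).1 hf
  have hgd : IsUnit (Qgᵀ).det := by
    rw [Matrix.det_transpose]; exact (Matrix.isUnit_iff_isUnit_det _).1 hg
  have h1 : Qfᵀ * Mᵀ = Nᵀ * Qgᵀ := by
    rw [← Matrix.transpose_mul, ← Matrix.transpose_mul, h]
  have h2 : Mᵀ * (Qgᵀ)⁻¹ = (Qfᵀ)⁻¹ * Nᵀ := by
    calc Mᵀ * (Qgᵀ)⁻¹ = (Qfᵀ)⁻¹ * (Qfᵀ * Mᵀ) * (Qgᵀ)⁻¹ := by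
          rw [← Matrix.mul_assoc, Matrix.nonsing_inv_mul _ hfd, Matrix.one_mul]
      _ = (Qfᵀ)⁻¹ * Nᵀ * (Qgᵀ * (Qgᵀ)⁻¹) := by
          rw [h1]; simp only [Matrix.mul_assoc]
      _ = (Qfᵀ)⁻¹ * Nᵀ := by rw [Matrix.mul_nonsing_inv _ hgd, Matrix.mul_one]
  rw [angTrans_true, angTrans_true]
  calc Jmat F a * Mᵀ * (Jmat F b)⁻¹ * (Jmat F b * (Qgᵀ)⁻¹ * (Jmat F b)⁻¹)
      = Jmat F a * (Mᵀ * (((Jmat F b)⁻¹ * Jmat F b) * (Qgᵀ)⁻¹)) * (Jmat F b)⁻¹ := by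
        simp only [Matrix.mul_assoc]
    _ = Jmat F a * (Mᵀ * (Qgᵀ)⁻¹) * (Jmat F b)⁻¹ := by
        rw [Matrix.nonsing_inv_mul _ (isUnit_J_det b), Matrix.one_mul]
    _ = Jmat F a * ((Qfᵀ)⁻¹ * Nᵀ) * (Jmat F b)⁻¹ := by rw [h2]
    _ = Jmat F a * (Qfᵀ)⁻¹ * ((Jmat F a)⁻¹ * Jmat F a) * (Nᵀ * (Jmat F b)⁻¹) := by
        rw [Matrix.nonsing_inv_mul _ (isUnit_J_det a)]
        simp only [Matrix.mul_one, Matrix.mul_assoc]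
    _ = Jmat F a * (Qfᵀ)⁻¹ * (Jmat F a)⁻¹ * (Jmat F a * Nᵀ * (Jmat F b)⁻¹) := by
        simp only [Matrix.mul_assoc]






/-- Intertwiner submodule: `T` with `L i * T (f i) = T (g i) * R i` for all `i`. -/
def hSub {σ τ : Type*} (f g : σ → τ) (k : τ → Type) [∀ j, Fintype (k j)]
    (L R : ∀ i : σ, Matrix (k (g i)) (k (f i)) F) :
    Submodule F (∀ j, Matrix (k j) (k j) F) where
  carrier := {T | ∀ i, L i * T (f i) = T (g i) * R i}
  add_mem' := by
    intro x y hx hy i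
    simp only [Pi.add_apply, Matrix.mul_add, Matrix.add_mul, hx i, hy i]
  zero_mem' := by intro i; simp
  smul_mem' := by
    intro c x hx i
    simp only [Pi.smul_apply, Matrix.mul_smul, Matrix.smul_mul, hx i]

lemma mem_hSub {σ τ : Type*} {f g : σ → τ} {k : τ → Type} [∀ j, Fintype (k j)]
    {L R : ∀ i : σ, Matrix (k (g i)) (k (f i)) F} {T : ∀ j, Matrix (k j) (k j) F} :
    T ∈ hSub f g k L R ↔ ∀ i, L i * T (f i) = T (g i) * R i := Iff.rfl

/-- The linear map extracting lower blocks. -/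
def lowerBlocks {τ : Type*} (n : τ → ℕ) :
    (∀ j, Matrix (Fin (n j) ⊕ Fin (n j)) (Fin (n j) ⊕ Fin (n j)) F) →ₗ[F]
      (∀ j, Matrix (Fin (n j)) (Fin (n j)) F) × (∀ j, Matrix (Fin (n j)) (Fin (n j)) F) where
  toFun T := (fun j => (T j).toBlocks₂₁, fun j => (T j).toBlocks₂₂)
  map_add' x y := rfl
  map_smul' c x := rfl

lemma blocks_mul_left {p q u v r : Type} [Fintype p] [Fintype q]
    (a : Matrix r p F) (b : Matrix r q F) (c : Matrix r p F) (d : Matrix r q F)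
    (X : Matrix (p ⊕ q) (u ⊕ v) F) :
    fromBlocks a b c d * X =
      fromBlocks (a * X.toBlocks₁₁ + b * X.toBlocks₂₁) (a * X.toBlocks₁₂ + b * X.toBlocks₂₂)
        (c * X.toBlocks₁₁ + d * X.toBlocks₂₁) (c * X.toBlocks₁₂ + d * X.toBlocks₂₂) := by
  conv_lhs => rw [← fromBlocks_toBlocks X]
  rw [fromBlocks_multiply]

lemma blocks_mul_right {p q u v r : Type} [Fintype p] [Fintype q]
    (a : Matrix p r F) (b : Matrix p r F) (c : Matrix q r F) (d : Matrix q r F)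
    (X : Matrix (u ⊕ v) (p ⊕ q) F) :
    X * fromBlocks a b c d =
      fromBlocks (X.toBlocks₁₁ * a + X.toBlocks₁₂ * c) (X.toBlocks₁₁ * b + X.toBlocks₁₂ * d)
        (X.toBlocks₂₁ * a + X.toBlocks₂₂ * c) (X.toBlocks₂₁ * b + X.toBlocks₂₂ * d) := by
  conv_lhs => rw [← fromBlocks_toBlocks X]
  rw [fromBlocks_multiply]

set_option synthInstance.maxHeartbeats 1000000 in
set_option maxHeartbeats 1000000 in
theorem roth_pure {σ τ : Type*} [Fintype τ] (n : τ → ℕ) (f g : σ → τ)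
    (A B C : ∀ i : σ, Matrix (Fin (n (g i))) (Fin (n (f i))) F)
    (P : ∀ j : τ, Matrix (Fin (n j) ⊕ Fin (n j)) (Fin (n j) ⊕ Fin (n j)) F)
    (hP : ∀ j, IsUnit (P j))
    (hMN : ∀ i, fromBlocks (A i) 0 0 (B i) * P (f i)
        = P (g i) * fromBlocks (A i) (C i) 0 (B i)) :
    ∃ X : ∀ j, Matrix (Fin (n j)) (Fin (n j)) F,
      ∀ i, A i * X (f i) - X (g i) * B i = C i := by
  classical
  have hdet : ∀ j, IsUnit (P j).det := fun j => (Matrix.isUnit_iff_isUnit_det _).1 (hP j)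
  set SN : Submodule F (∀ j, Matrix (Fin (n j) ⊕ Fin (n j)) (Fin (n j) ⊕ Fin (n j)) F) :=
    hSub f g (fun j => Fin (n j) ⊕ Fin (n j))
      (fun i => fromBlocks (A i) (C i) 0 (B i)) (fun i => fromBlocks (A i) 0 0 (B i)) with hSN
  set SM : Submodule F (∀ j, Matrix (Fin (n j) ⊕ Fin (n j)) (Fin (n j) ⊕ Fin (n j)) F) :=
    hSub f g (fun j => Fin (n j) ⊕ Fin (n j))
      (fun i => fromBlocks (A i) 0 0 (B i)) (fun i => fromBlocks (A i) 0 0 (B i)) with hSM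
  set HBA : Submodule F (∀ j, Matrix (Fin (n j)) (Fin (n j)) F) :=
    hSub f g (fun j => Fin (n j)) B A with hHBA
  set HBB : Submodule F (∀ j, Matrix (Fin (n j)) (Fin (n j)) F) :=
    hSub f g (fun j => Fin (n j)) B B with hHBB
  set Φ := lowerBlocks (F := F) n with hΦ
  -- the multiplication-by-P equivalence
  let e : (∀ j, Matrix (Fin (n j) ⊕ Fin (n j)) (Fin (n j) ⊕ Fin (n j)) F) ≃ₗ[F]
      (∀ j, Matrix (Fin (n j) ⊕ Fin (n j)) (Fin (n j) ⊕ Fin (n j)) F) :=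
    { toFun := fun T j => P j * T j
      invFun := fun T j => (P j)⁻¹ * T j
      map_add' := fun x y => funext fun j => Matrix.mul_add _ _ _
      map_smul' := fun c x => funext fun j => by
        show P j * (c • x j) = c • (P j * x j)
        rw [Matrix.mul_smul]
      left_inv := fun T => funext fun j => by
        show (P j)⁻¹ * (P j * T j) = T j
        rw [← Matrix.mul_assoc, Matrix.nonsing_inv_mul _ (hdet j), Matrix.one_mul]
      right_inv := fun T => funext fun j => by
        show P j * ((P j)⁻¹ * T j) = T j
        rw [← Matrix.mul_assoc, Matrix.mul_nonsing_inv _ (hdet j), Matrix.one_mul] }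
  have hmapE : Submodule.map (e : _ →ₗ[F] _) SN = SM := by
    ext T
    simp only [Submodule.mem_map]
    constructor
    · rintro ⟨S, hS, rfl⟩
      intro i
      show fromBlocks (A i) 0 0 (B i) * (P (f i) * S (f i))
        = (P (g i) * S (g i)) * fromBlocks (A i) 0 0 (B i)
      have hSi : fromBlocks (A i) (C i) 0 (B i) * S (f i)
          = S (g i) * fromBlocks (A i) 0 0 (B i) := hS i
      rw [← Matrix.mul_assoc, hMN i, Matrix.mul_assoc, hSi, Matrix.mul_assoc]
    · intro hT
      refine ⟨fun j => (P j)⁻¹ * T j, fun i => ?_, funext fun j => by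
        show P j * ((P j)⁻¹ * T j) = T j
        rw [← Matrix.mul_assoc, Matrix.mul_nonsing_inv _ (hdet j), Matrix.one_mul]⟩
      show fromBlocks (A i) (C i) 0 (B i) * ((P (f i))⁻¹ * T (f i))
        = ((P (g i))⁻¹ * T (g i)) * fromBlocks (A i) 0 0 (B i)
      have hTi : fromBlocks (A i) 0 0 (B i) * T (f i)
          = T (g i) * fromBlocks (A i) 0 0 (B i) := hT i
      have hNP : fromBlocks (A i) (C i) 0 (B i) * (P (f i))⁻¹
          = (P (g i))⁻¹ * fromBlocks (A i) 0 0 (B i) := by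
        have h1 : P (g i) * (fromBlocks (A i) (C i) 0 (B i) * (P (f i))⁻¹)
            = fromBlocks (A i) 0 0 (B i) := by
          rw [← Matrix.mul_assoc, ← hMN i, Matrix.mul_assoc,
            Matrix.mul_nonsing_inv _ (hdet (f i)), Matrix.mul_one]
        rw [← h1, ← Matrix.mul_assoc, Matrix.nonsing_inv_mul _ (hdet (g i)), Matrix.one_mul]
      rw [← Matrix.mul_assoc, hNP, Matrix.mul_assoc, hTi, Matrix.mul_assoc]
  have hrank1 : Module.finrank F SN = Module.finrank F SM := by
    rw [← hmapE, LinearEquiv.finrank_map_eq]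
  -- rank-nullity for the restriction of Φ
  have rn : ∀ S : Submodule F (∀ j, Matrix (Fin (n j) ⊕ Fin (n j)) (Fin (n j) ⊕ Fin (n j)) F),
      Module.finrank F (Submodule.map Φ S) + Module.finrank F ↥(S ⊓ LinearMap.ker Φ)
        = Module.finrank F S := by
    intro S
    have h1 := LinearMap.finrank_range_add_finrank_ker (Φ.domRestrict S)
    rw [LinearMap.range_domRestrict, LinearMap.ker_domRestrict] at h1
    have h2 : Submodule.comap S.subtype (LinearMap.ker Φ)
        = Submodule.comap S.subtype (S ⊓ LinearMap.ker Φ) := by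
      ext x
      simp [Submodule.mem_comap, x.2]
    have h3 : Module.finrank F ↥(Submodule.comap S.subtype (S ⊓ LinearMap.ker Φ))
        = Module.finrank F ↥(S ⊓ LinearMap.ker Φ) :=
      LinearEquiv.finrank_eq (Submodule.comapSubtypeEquivOfLe inf_le_left)
    rw [h2, h3] at h1
    exact h1
  -- kernel membership characterization
  have hker : ∀ T, T ∈ LinearMap.ker Φ ↔
      (∀ j, (T j).toBlocks₂₁ = 0) ∧ (∀ j, (T j).toBlocks₂₂ = 0) := by
    intro T
    constructor
    · intro h
      constructor
      · intro j; exact congrFun (congrArg Prod.fst h) j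
      · intro j; exact congrFun (congrArg Prod.snd h) j
    · rintro ⟨h1, h2⟩
      have : Φ T = (fun j => (T j).toBlocks₂₁, fun j => (T j).toBlocks₂₂) := rfl
      rw [LinearMap.mem_ker, this]
      exact Prod.ext (funext h1) (funext h2)
  -- on the kernel of Φ, N and M act the same
  have hNMker : ∀ T ∈ LinearMap.ker Φ, ∀ i,
      fromBlocks (A i) (C i) 0 (B i) * T (f i)
        = fromBlocks (A i) 0 0 (B i) * T (f i) := by
    intro T hT i
    obtain ⟨h21, h22⟩ := (hker T).1 hT
    rw [blocks_mul_left, blocks_mul_left, h21 (f i), h22 (f i)]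
    simp
  have hinfker : SN ⊓ LinearMap.ker Φ = SM ⊓ LinearMap.ker Φ := by
    ext T
    simp only [Submodule.mem_inf]
    constructor
    · rintro ⟨hT, hk⟩
      refine ⟨fun i => ?_, hk⟩
      have hTi : fromBlocks (A i) (C i) 0 (B i) * T (f i)
          = T (g i) * fromBlocks (A i) 0 0 (B i) := hT i
      show fromBlocks (A i) 0 0 (B i) * T (f i) = T (g i) * fromBlocks (A i) 0 0 (B i)
      rw [← hNMker T hk i, hTi]
    · rintro ⟨hT, hk⟩
      refine ⟨fun i => ?_, hk⟩
      have hTi : fromBlocks (A i) 0 0 (B i) * T (f i)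
          = T (g i) * fromBlocks (A i) 0 0 (B i) := hT i
      show fromBlocks (A i) (C i) 0 (B i) * T (f i) = T (g i) * fromBlocks (A i) 0 0 (B i)
      rw [hNMker T hk i, hTi]
  -- the image of any "triangular" hSub under Φ lands in HBA.prod HBB
  have hle : ∀ C' : ∀ i : σ, Matrix (Fin (n (g i))) (Fin (n (f i))) F,
      Submodule.map Φ (hSub f g (fun j => Fin (n j) ⊕ Fin (n j))
        (fun i => fromBlocks (A i) (C' i) 0 (B i))
        (fun i => fromBlocks (A i) 0 0 (B i))) ≤ HBA.prod HBB := by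
    intro C'
    rintro x ⟨T, hT, rfl⟩
    have hmem : ∀ i,
        B i * (T (f i)).toBlocks₂₁ = (T (g i)).toBlocks₂₁ * A i
        ∧ B i * (T (f i)).toBlocks₂₂ = (T (g i)).toBlocks₂₂ * B i := by
      intro i
      have hi : fromBlocks (A i) (C' i) 0 (B i) * T (f i)
          = T (g i) * fromBlocks (A i) 0 0 (B i) := hT i
      rw [blocks_mul_left, blocks_mul_right] at hi
      rw [fromBlocks_inj] at hi
      obtain ⟨-, -, h21, h22⟩ := hi
      constructor
      · simpa using h21
      · simpa using h22
    exact ⟨fun i => (hmem i).1, fun i => (hmem i).2⟩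
  have hsurjM : Submodule.map Φ SM = HBA.prod HBB := by
    refine le_antisymm (hle (fun i => 0)) ?_
    rintro ⟨U, V⟩ ⟨hU, hV⟩
    refine ⟨fun j => fromBlocks 0 0 (U j) (V j), fun i => ?_, rfl⟩
    show fromBlocks (A i) 0 0 (B i) * fromBlocks 0 0 (U (f i)) (V (f i))
      = fromBlocks 0 0 (U (g i)) (V (g i)) * fromBlocks (A i) 0 0 (B i)
    rw [fromBlocks_multiply, fromBlocks_multiply]
    simp only [Matrix.mul_zero, Matrix.zero_mul, add_zero, zero_add]
    rw [hU i, hV i]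
  -- conclude map Φ SN = HBA.prod HBB
  have hrank2 : Module.finrank F (Submodule.map Φ SN) = Module.finrank F (HBA.prod HBB) := by
    have r1 := rn SN
    have r2 := rn SM
    rw [hinfker] at r1
    rw [hsurjM] at r2
    omega
  have hsurjN : Submodule.map Φ SN = HBA.prod HBB :=
    Submodule.eq_of_le_of_finrank_le (hle C) (le_of_eq hrank2.symm)
  have hmem1 : ((0 : ∀ j, Matrix (Fin (n j)) (Fin (n j)) F),
      (fun j => (1 : Matrix (Fin (n j)) (Fin (n j)) F))) ∈ HBA.prod HBB := by
    refine ⟨fun i => by simp, fun i => ?_⟩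
    show B i * (1 : Matrix _ _ F) = (1 : Matrix _ _ F) * B i
    rw [Matrix.mul_one, Matrix.one_mul]
  rw [← hsurjN] at hmem1
  obtain ⟨T, hTS, hTΦ⟩ := hmem1
  have h21 : ∀ j, (T j).toBlocks₂₁ = 0 := fun j => congrFun (congrArg Prod.fst hTΦ) j
  have h22 : ∀ j, (T j).toBlocks₂₂ = 1 := fun j => congrFun (congrArg Prod.snd hTΦ) j
  refine ⟨fun j => -(T j).toBlocks₁₂, fun i => ?_⟩
  have hi : fromBlocks (A i) (C i) 0 (B i) * T (f i)
      = T (g i) * fromBlocks (A i) 0 0 (B i) := hTS i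
  rw [blocks_mul_left, blocks_mul_right, fromBlocks_inj] at hi
  obtain ⟨-, h12, -, -⟩ := hi
  rw [h22 (f i), Matrix.mul_one, Matrix.mul_zero, zero_add] at h12
  -- h12 : A i * (T (f i)).toBlocks₁₂ + C i = (T (g i)).toBlocks₁₂ * B i
  rw [Matrix.mul_neg, Matrix.neg_mul, sub_neg_eq_add, ← h12]
  abel




lemma angTrans_unitriangular {k : ℕ} (b : Bool) (Y : Matrix (Fin k) (Fin k) F) :
    angTrans b (fromBlocks 1 Y 0 1) = fromBlocks 1 (condTrans b Y) 0 1 := by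
  cases b
  · rfl
  · rw [angTrans_true]
    have ht : (fromBlocks (1 : Matrix (Fin k) (Fin k) F) Y (0 : Matrix (Fin k) (Fin k) F)
        (1 : Matrix (Fin k) (Fin k) F))ᵀ = fromBlocks (1 : Matrix (Fin k) (Fin k) F)
        (0 : Matrix (Fin k) (Fin k) F) Yᵀ (1 : Matrix (Fin k) (Fin k) F) := by
      rw [fromBlocks_transpose]; simp
    have hinv : (fromBlocks (1 : Matrix (Fin k) (Fin k) F) (0 : Matrix (Fin k) (Fin k) F)
        Yᵀ (1 : Matrix (Fin k) (Fin k) F))⁻¹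
        = fromBlocks (1 : Matrix (Fin k) (Fin k) F) (0 : Matrix (Fin k) (Fin k) F)
        (-Yᵀ) (1 : Matrix (Fin k) (Fin k) F) := by
      refine inv_eq_right_inv ?_
      rw [fromBlocks_multiply, ← fromBlocks_one (l := Fin k) (m := Fin k)]
      congr 1 <;> simp
    rw [ht, hinv, J_conj]
    simp [condTrans]

end RothAux

open RothAux in
/-- Theorem 1 of the paper, transpose case: over a field of characteristic not 2,
the system `A_i X_{f i}^{ε_i} - X_{g i}^{δ_i} B_i = C_i` with `ε_i, δ_i ∈ {id, ⊤}`
is solvable iff there are invertible `P_1,…,P_t` with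
`[[A_i,0],[0,B_i]] P_{f i}^{⟪ε_i⟫} = P_{g i}^{⟪δ_i⟫} [[A_i,C_i],[0,B_i]]`. -/
theorem roth_system_transpose {F : Type*} [Field F] (h2 : (2 : F) ≠ 0) {s t : ℕ}
    (n : Fin t → ℕ) (f g : Fin s → Fin t) (ε δ : Fin s → Bool)
    (A B C : ∀ i : Fin s, Matrix (Fin (n (g i))) (Fin (n (f i))) F) :
    (∃ X : ∀ j : Fin t, Matrix (Fin (n j)) (Fin (n j)) F,
        ∀ i, A i * condTrans (ε i) (X (f i)) - condTrans (δ i) (X (g i)) * B i = C i) ↔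
      ∃ P : ∀ j : Fin t,
          Matrix (Fin (n j) ⊕ Fin (n j)) (Fin (n j) ⊕ Fin (n j)) F,
        (∀ j, IsUnit (P j)) ∧
        ∀ i, fromBlocks (A i) 0 0 (B i) * angTrans (ε i) (P (f i))
              = angTrans (δ i) (P (g i)) * fromBlocks (A i) (C i) 0 (B i) := by
  constructor
  · rintro ⟨X, hX⟩
    refine ⟨fun j => fromBlocks 1 (X j) 0 1, fun j => ?_, fun i => ?_⟩
    · refine (Matrix.isUnit_iff_isUnit_det _).2 (isUnit_det_of_right_inverse
        (B := fromBlocks 1 (-(X j)) 0 1) ?_)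
      rw [fromBlocks_multiply, ← fromBlocks_one (l := Fin (n j)) (m := Fin (n j))]
      congr 1 <;> simp
    · rw [angTrans_unitriangular, angTrans_unitriangular]
      have h := sub_eq_iff_eq_add.mp (hX i)
      rw [fromBlocks_multiply, fromBlocks_multiply]
      congr 1 <;> simp [h]
  · rintro ⟨P, hPu, hPe⟩
    -- apply the pure Roth system criterion to the doubled system
    refine Exists.elim (roth_pure (σ := Fin s × Bool) (τ := Fin t × Bool)
      (fun q => n q.1)
      (fun p => bif p.2 then (g p.1, !(δ p.1)) else (f p.1, ε p.1))
      (fun p => bif p.2 then (f p.1, !(ε p.1)) else (g p.1, δ p.1))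
      (fun p => match p with | (i, false) => A i | (i, true) => -(B i)ᵀ)
      (fun p => match p with | (i, false) => B i | (i, true) => -(A i)ᵀ)
      (fun p => match p with | (i, false) => C i | (i, true) => (C i)ᵀ)
      (fun q => angTrans q.2 (P q.1))
      (fun q => isUnit_angTrans q.2 (hPu q.1))
      ?hq) (fun Z hZ => ?_)
    case hq =>
      -- the doubled system of P-equations
      rintro ⟨i, b⟩
      cases b
      · exact hPe i
      · show fromBlocks (-(B i)ᵀ) 0 0 (-(A i)ᵀ) * angTrans (!(δ i)) (P (g i))
          = angTrans (!(ε i)) (P (f i)) * fromBlocks (-(B i)ᵀ) (C i)ᵀ 0 (-(A i)ᵀ)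
        have hflip := flip_eq (isUnit_angTrans (ε i) (hPu (f i)))
          (isUnit_angTrans (δ i) (hPu (g i))) (hPe i)
        rw [angTrans_not (δ i) (hPu (g i)), angTrans_not (ε i) (hPu (f i))] at hflip
        have hM : Jmat F (n (f i)) * (fromBlocks (A i) 0 0 (B i))ᵀ * (Jmat F (n (g i)))⁻¹
            = fromBlocks (B i)ᵀ 0 0 (A i)ᵀ := by
          rw [fromBlocks_transpose, J_conj]; simp
        have hN : Jmat F (n (f i)) * (fromBlocks (A i) (C i) 0 (B i))ᵀ * (Jmat F (n (g i)))⁻¹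
            = fromBlocks (B i)ᵀ (-(C i)ᵀ) 0 (A i)ᵀ := by
          rw [fromBlocks_transpose, J_conj]; simp
        rw [hM, hN] at hflip
        have hnegM : fromBlocks (-(B i)ᵀ) 0 0 (-(A i)ᵀ)
            = -(fromBlocks ((B i)ᵀ) 0 0 ((A i)ᵀ)) := by
          rw [fromBlocks_neg]; simp
        have hnegN : fromBlocks (-(B i)ᵀ) ((C i)ᵀ) 0 (-(A i)ᵀ)
            = -(fromBlocks ((B i)ᵀ) (-(C i)ᵀ) 0 ((A i)ᵀ)) := by
          rw [fromBlocks_neg]; simp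
        rw [hnegM, hnegN, Matrix.neg_mul, Matrix.mul_neg, hflip]
    -- extract a solution by symmetrization
    refine ⟨fun j => (2 : F)⁻¹ • (Z (j, false) + (Z (j, true))ᵀ), fun i => ?_⟩
    have e1 : A i * Z (f i, ε i) - Z (g i, δ i) * B i = C i := hZ (i, false)
    have e2' : (-(B i)ᵀ) * Z (g i, !(δ i)) - Z (f i, !(ε i)) * (-(A i)ᵀ) = (C i)ᵀ :=
      hZ (i, true)
    have e2 : A i * (Z (f i, !(ε i)))ᵀ - (Z (g i, !(δ i)))ᵀ * B i = C i := by
      have h := congrArg Matrix.transpose e2'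
      rw [Matrix.transpose_sub, Matrix.transpose_mul, Matrix.transpose_mul,
        Matrix.transpose_neg, Matrix.transpose_neg, Matrix.transpose_transpose,
        Matrix.transpose_transpose, Matrix.transpose_transpose] at h
      rw [← h]
      simp [Matrix.neg_mul, Matrix.mul_neg]
      abel
    have hct : ∀ (b : Bool) (j : Fin t),
        condTrans b ((2 : F)⁻¹ • (Z (j, false) + (Z (j, true))ᵀ))
          = (2 : F)⁻¹ • (Z (j, b) + (Z (j, !b))ᵀ) := by
      intro b j
      cases b
      · rfl
      · show ((2 : F)⁻¹ • (Z (j, false) + (Z (j, true))ᵀ))ᵀ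
          = (2 : F)⁻¹ • (Z (j, true) + (Z (j, false))ᵀ)
        rw [Matrix.transpose_smul, Matrix.transpose_add, Matrix.transpose_transpose,
          add_comm]
    rw [hct, hct, Matrix.mul_smul, Matrix.smul_mul, ← smul_sub,
      Matrix.mul_add, Matrix.add_mul]
    have key : A i * Z (f i, ε i) + A i * (Z (f i, !(ε i)))ᵀ
        - (Z (g i, δ i) * B i + (Z (g i, !(δ i)))ᵀ * B i) = C i + C i := by
      calc A i * Z (f i, ε i) + A i * (Z (f i, !(ε i)))ᵀ
          - (Z (g i, δ i) * B i + (Z (g i, !(δ i)))ᵀ * B i)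
          = (A i * Z (f i, ε i) - Z (g i, δ i) * B i)
            + (A i * (Z (f i, !(ε i)))ᵀ - (Z (g i, !(δ i)))ᵀ * B i) := by abel
        _ = C i + C i := by rw [e1, e2]
    rw [key, ← two_smul F (C i), smul_smul, inv_mul_cancel₀ h2]
    exact one_smul F (C i)
end

section
/- Over ℂ, the system A_i X_{i'}^{ε_i} - X_{i''}^{δ_i} B_i = C_i (i = 1,…,s) with ε_i, δ_i ∈ {id, conjugation, transpose, conjugate-transpose} has a solution if and only if there exist invertible complex matrices P_1,…,P_t with [[A_i,0],[0,B_i]] · P_{i'}^{⟪ε_i⟫} = P_{i''}^{⟪δ_i⟫} · [[A_i,C_i],[0,B_i]] for all i, where P^{⟪σ⟫} = P^σ if σ ∈ {id, conj} and P^{⟪σ⟫} = J (P^σ)⁻¹ J⁻¹ if σ ∈ {⊤, *}, with J = [[0,I],[-I,0]]. -/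
/-!
Roth's theorem for a plain system `A_i X_{p i} - X_{q i} B_i = C_i` over a field follows from the
Flanders–Wimmer dimension count. Let `H(W)` be the space of tuples `Y` with
`W_i Y_{p i} = Y_{q i} B_i`. A block relation with invertible `Q` makes `H([[A,C],[0,B]])` and
`H([[A,0],[0,B]])` isomorphic, and the latter has dimension `dim H(A) + dim H(B)`. The kernel of
the bottom-rows map `H([[A,C],[0,B]]) → H(B)` is `H(A)` for every `C`, so this map is onto; the top
rows of a preimage of the identity tuple give `-X`.

The mixed system is reduced to a plain one by adding the images of every equation under the four
operations (transposing ones swap the two sides), with one unknown for each `X_j^τ`. Applying the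
same operations to the given relations and conjugating by `J` in the transposing case (this is
where `J (P^σ)⁻¹ J⁻¹` comes from) yields block relations for the new system. Averaging its solution
over the Klein four-group of operations gives a solution of the original one.
-/

open Matrix

/-- The four operations `id`, `conj`, `⊤`, `*` on square complex matrices, encoded by a
pair of Booleans: the first component applies entrywise conjugation, the second transposes. -/
def fourOp {k : Type*} (σ : Bool × Bool) (M : Matrix k k ℂ) : Matrix k k ℂ :=
  if σ.2 then (if σ.1 then M.map (starRingEnd ℂ) else M)ᵀ
  else (if σ.1 then M.map (starRingEnd ℂ) else M)

/-- The block matrix `J = [[0,I],[-I,0]]`. -/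
def JmatC (k : ℕ) : Matrix (Fin k ⊕ Fin k) (Fin k ⊕ Fin k) ℂ :=
  fromBlocks 0 1 (-1) 0

/-- `P^{⟪σ⟫} = P^σ` for `σ ∈ {id, conj}` and `P^{⟪σ⟫} = J (P^σ)⁻¹ J⁻¹` for `σ ∈ {⊤, *}`. -/
noncomputable def angFour {k : ℕ} (σ : Bool × Bool)
    (P : Matrix (Fin k ⊕ Fin k) (Fin k ⊕ Fin k) ℂ) :
    Matrix (Fin k ⊕ Fin k) (Fin k ⊕ Fin k) ℂ :=
  if σ.2 then JmatC k * (fourOp σ P)⁻¹ * (JmatC k)⁻¹ else fourOp σ P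

open Module

section SylvesterSystem

variable {K : Type*} [Field K] {ι κ : Type*} {p q : ι → κ} {V : κ → Type*} [∀ k, Fintype (V k)]
  {R : κ → Type*} [∀ k, Fintype (R k)]

def intertwiners (W : ∀ i, Matrix (R (q i)) (R (p i)) K) (B : ∀ i, Matrix (V (q i)) (V (p i)) K) :
    Submodule K (∀ k, Matrix (R k) (V k) K) where
  carrier := {Y | ∀ i, W i * Y (p i) = Y (q i) * B i}
  add_mem' hY hZ i := by simp [Matrix.mul_add, Matrix.add_mul, hY i, hZ i]
  zero_mem' i := by simp
  smul_mem' c Y hY i := by simp [hY i]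

@[simp]
theorem mem_intertwiners {W : ∀ i, Matrix (R (q i)) (R (p i)) K}
    {B : ∀ i, Matrix (V (q i)) (V (p i)) K} {Y : ∀ k, Matrix (R k) (V k) K} :
    Y ∈ intertwiners W B ↔ ∀ i, W i * Y (p i) = Y (q i) * B i :=
  Iff.rfl

theorem finrank_intertwiners_eq_of_mul_eq [∀ k, DecidableEq (R k)]
    {W W' : ∀ i, Matrix (R (q i)) (R (p i)) K}
    (B : ∀ i, Matrix (V (q i)) (V (p i)) K) {Q : ∀ k, Matrix (R k) (R k) K}
    (hQ : ∀ k, IsUnit (Q k)) (h : ∀ i, W' i * Q (p i) = Q (q i) * W i) :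
    finrank K (intertwiners W B) = finrank K (intertwiners W' B) := by
  have hQ : ∀ k, IsUnit (Q k).det := fun k => (isUnit_iff_isUnit_det _).1 (hQ k)
  let L := (LinearMap.piMap fun k => mulLeftLinearMap (V k) K (Q k)).restrict
    (p := intertwiners W B) (q := intertwiners W' B) fun Y hY i => by
      simp only [LinearMap.coe_piMap, Pi.map_apply, mulLeftLinearMap_apply]
      rw [← Matrix.mul_assoc, h, Matrix.mul_assoc, hY i, Matrix.mul_assoc]
  refine (LinearEquiv.ofBijective L ⟨fun Y Z hYZ => ?_, fun Y => ?_⟩).finrank_eq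
  · refine Subtype.ext (funext fun k => ?_)
    have : (Q k)⁻¹ * (Q k * Y.1 k) = (Q k)⁻¹ * (Q k * Z.1 k) :=
      congrArg (fun Y => (Q k)⁻¹ * Y.1 k) hYZ
    rwa [nonsing_inv_mul_cancel_left _ _ (hQ k), nonsing_inv_mul_cancel_left _ _ (hQ k)] at this
  · refine ⟨⟨fun k => (Q k)⁻¹ * Y.1 k, fun i => ?_⟩, Subtype.ext (funext fun k => ?_)⟩
    · calc W i * ((Q (p i))⁻¹ * Y.1 (p i))
          = (Q (q i))⁻¹ * (W' i * (Q (p i) * ((Q (p i))⁻¹ * Y.1 (p i)))) := by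
            rw [← Matrix.mul_assoc (W' i), h, Matrix.mul_assoc,
              nonsing_inv_mul_cancel_left _ _ (hQ _)]
        _ = (Q (q i))⁻¹ * Y.1 (q i) * B i := by
            rw [mul_nonsing_inv_cancel_left _ _ (hQ _), Y.2 i, Matrix.mul_assoc]
    · exact mul_nonsing_inv_cancel_left _ _ (hQ k)

variable (A B C : ∀ i, Matrix (V (q i)) (V (p i)) K)

abbrev blockIntertwiners : Submodule K (∀ k, Matrix (V k ⊕ V k) (V k) K) :=
  intertwiners (R := fun k => V k ⊕ V k) (fun i => fromBlocks (A i) (C i) 0 (B i)) B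

theorem fromRows_mem_blockIntertwiners {Y Z : ∀ k, Matrix (V k) (V k) K} :
    (fun k => fromRows (Y k) (Z k)) ∈ blockIntertwiners A B C ↔
      (∀ i, A i * Y (p i) + C i * Z (p i) = Y (q i) * B i) ∧ Z ∈ intertwiners B B := by
  simp only [mem_intertwiners, fromBlocks_mul_fromRows, fromRows_mul, fromRows_ext_iff,
    Matrix.zero_mul, zero_add, forall_and]

theorem mem_blockIntertwiners {Y : ∀ k, Matrix (V k ⊕ V k) (V k) K} :
    Y ∈ blockIntertwiners A B C ↔
      (∀ i, A i * toRows₁ (Y (p i)) + C i * toRows₂ (Y (p i)) = toRows₁ (Y (q i)) * B i) ∧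
        (fun k => toRows₂ (Y k)) ∈ intertwiners B B := by
  conv_lhs => rw [show Y = fun k => fromRows (toRows₁ (Y k)) (toRows₂ (Y k)) by simp]
  exact fromRows_mem_blockIntertwiners A B C

def bottomRows : blockIntertwiners A B C →ₗ[K] intertwiners B B where
  toFun Y := ⟨fun k => toRows₂ (Y.1 k), ((mem_blockIntertwiners A B C).1 Y.2).2⟩
  map_add' _ _ := rfl
  map_smul' _ _ := rfl

theorem finrank_ker_bottomRows :
    finrank K (LinearMap.ker (bottomRows A B C)) = finrank K (intertwiners A B) := by
  have hker (Y : LinearMap.ker (bottomRows A B C)) k : toRows₂ (Y.1.1 k) = 0 :=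
    congrFun (congrArg Subtype.val Y.2) k
  let topRows : LinearMap.ker (bottomRows A B C) →ₗ[K] intertwiners A B :=
    { toFun Y := ⟨fun k => toRows₁ (Y.1.1 k), fun i => by
        simpa [hker] using ((mem_blockIntertwiners A B C).1 Y.1.2).1 i⟩
      map_add' _ _ := rfl
      map_smul' _ _ := rfl }
  refine (LinearEquiv.ofBijective topRows ⟨fun Y Z hYZ => ?_, fun Y => ?_⟩).finrank_eq
  · refine Subtype.ext (Subtype.ext (funext fun k => ?_))
    rw [← fromRows_toRows (Y.1.1 k), ← fromRows_toRows (Z.1.1 k), hker, hker]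
    exact congrArg (fun Y => fromRows (Y.1 k) 0) hYZ
  · refine ⟨⟨⟨fun k => fromRows (Y.1 k) 0, ?_⟩, ?_⟩, rfl⟩
    · exact (fromRows_mem_blockIntertwiners A B C).2
        ⟨fun i => by simpa using Y.2 i, fun i => by simp⟩
    · exact Subtype.ext (funext fun k => rfl)

theorem bottomRows_zero_surjective : Function.Surjective (bottomRows A B 0) := fun Z =>
  ⟨⟨fun k => fromRows 0 (Z.1 k),
    (fromRows_mem_blockIntertwiners A B 0).2 ⟨fun i => by simp, Z.2⟩⟩, rfl⟩

variable [Fintype κ]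

theorem finrank_blockIntertwiners_zero :
    finrank K (blockIntertwiners A B 0) =
      finrank K (intertwiners A B) + finrank K (intertwiners B B) := by
  rw [← (bottomRows A B 0).finrank_range_add_finrank_ker, finrank_ker_bottomRows,
    LinearMap.range_eq_top.2 (bottomRows_zero_surjective A B), finrank_top, add_comm]

variable [∀ k, DecidableEq (V k)]

variable {A B C} in
theorem bottomRows_surjective {Q : ∀ k, Matrix (V k ⊕ V k) (V k ⊕ V k) K}
    (hQ : ∀ k, IsUnit (Q k))
    (h : ∀ i, fromBlocks (A i) 0 0 (B i) * Q (p i) = Q (q i) * fromBlocks (A i) (C i) 0 (B i)) :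
    Function.Surjective (bottomRows A B C) := by
  have hconj : finrank K (blockIntertwiners A B C) = finrank K (blockIntertwiners A B 0) :=
    finrank_intertwiners_eq_of_mul_eq B hQ h
  have hrank := (bottomRows A B C).finrank_range_add_finrank_ker
  rw [finrank_ker_bottomRows, hconj, finrank_blockIntertwiners_zero] at hrank
  rw [← LinearMap.range_eq_top]
  exact Submodule.eq_top_of_finrank_eq (by omega)

variable {A B C} in
theorem exists_sylvester_solution {Q : ∀ k, Matrix (V k ⊕ V k) (V k ⊕ V k) K}
    (hQ : ∀ k, IsUnit (Q k))
    (h : ∀ i, fromBlocks (A i) 0 0 (B i) * Q (p i) = Q (q i) * fromBlocks (A i) (C i) 0 (B i)) :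
    ∃ X : ∀ k, Matrix (V k) (V k) K, ∀ i, A i * X (p i) - X (q i) * B i = C i := by
  obtain ⟨Y, hY⟩ := bottomRows_surjective hQ h ⟨fun _ => 1, fun i => by simp⟩
  have hbottom k : toRows₂ (Y.1 k) = 1 := congrFun (congrArg Subtype.val hY) k
  refine ⟨fun k => -toRows₁ (Y.1 k), fun i => ?_⟩
  have hY := ((mem_blockIntertwiners A B C).1 Y.2).1 i
  rw [hbottom, Matrix.mul_one] at hY
  rw [Matrix.mul_neg, Matrix.neg_mul, ← hY]
  abel

end SylvesterSystem


def conjIf (b : Bool) {m n : Type*} (M : Matrix m n ℂ) : Matrix m n ℂ :=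
  if b then M.map (starRingEnd ℂ) else M

section conjIf

variable {l m n : Type*}

@[simp] theorem conjIf_false (M : Matrix m n ℂ) : conjIf false M = M := rfl

theorem conjIf_conjIf (a b : Bool) (M : Matrix m n ℂ) :
    conjIf a (conjIf b M) = conjIf (xor a b) M := by
  cases a <;> cases b <;> ext <;> simp [conjIf]

@[simp] theorem conjIf_conjIf_self (b : Bool) (M : Matrix m n ℂ) : conjIf b (conjIf b M) = M := by
  simp [conjIf_conjIf]

theorem conjIf_mul [Fintype m] (b : Bool) (M : Matrix l m ℂ) (N : Matrix m n ℂ) :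
    conjIf b (M * N) = conjIf b M * conjIf b N := by
  cases b <;> simp [conjIf, Matrix.map_mul]

@[simp] theorem conjIf_one [DecidableEq m] (b : Bool) : conjIf b (1 : Matrix m m ℂ) = 1 := by
  cases b <;> simp [conjIf]

@[simp] theorem conjIf_zero (b : Bool) : conjIf b (0 : Matrix m n ℂ) = 0 := by
  cases b <;> simp [conjIf]

theorem conjIf_neg (b : Bool) (M : Matrix m n ℂ) : conjIf b (-M) = -conjIf b M := by
  cases b <;> simp [conjIf, Matrix.map_neg]

theorem conjIf_sub (b : Bool) (M N : Matrix m n ℂ) :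
    conjIf b (M - N) = conjIf b M - conjIf b N := by
  cases b <;> simp [conjIf, Matrix.map_sub]

theorem conjIf_transpose (b : Bool) (M : Matrix m n ℂ) : conjIf b Mᵀ = (conjIf b M)ᵀ := by
  cases b <;> simp [conjIf, Matrix.transpose_map]

theorem conjIf_fromBlocks {m' n' : Type*} (b : Bool) (A : Matrix m n ℂ) (B : Matrix m n' ℂ)
    (C : Matrix m' n ℂ) (D : Matrix m' n' ℂ) :
    conjIf b (fromBlocks A B C D) =
      fromBlocks (conjIf b A) (conjIf b B) (conjIf b C) (conjIf b D) := by
  cases b <;> simp [conjIf, Matrix.fromBlocks_map]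

theorem conjIf_nonsing_inv [Fintype m] [DecidableEq m] (b : Bool) (M : Matrix m m ℂ) :
    conjIf b M⁻¹ = (conjIf b M)⁻¹ := by
  cases b
  · rfl
  · have := (starRingEnd ℂ).map_adjugate M
    simp only [RingHom.mapMatrix_apply] at this
    simp [conjIf, Matrix.inv_def, RingHom.map_det, Matrix.map_smul', this]

theorem isUnit_conjIf [Fintype m] [DecidableEq m] (b : Bool) {M : Matrix m m ℂ} (h : IsUnit M) :
    IsUnit (conjIf b M) := by
  cases b
  · exact h
  · simpa [conjIf] using h.map (starRingEnd ℂ).mapMatrix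

end conjIf

def fourOpMul (σ τ : Bool × Bool) : Bool × Bool := (xor σ.1 τ.1, xor σ.2 τ.2)

theorem fourOpMul_fourOpMul_cancel (σ τ : Bool × Bool) : fourOpMul (fourOpMul σ τ) σ = τ := by
  rcases σ with ⟨_ | _, _ | _⟩ <;> simp [fourOpMul]

section fourOp

variable {k : Type*}

theorem fourOp_false (b : Bool) (M : Matrix k k ℂ) : fourOp (b, false) M = conjIf b M := rfl

theorem fourOp_true (b : Bool) (M : Matrix k k ℂ) : fourOp (b, true) M = (conjIf b M)ᵀ := rfl

theorem fourOp_fourOp (σ τ : Bool × Bool) (M : Matrix k k ℂ) :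
    fourOp σ (fourOp τ M) = fourOp (fourOpMul σ τ) M := by
  rcases σ with ⟨a, _ | _⟩ <;> rcases τ with ⟨b, _ | _⟩ <;>
    simp [fourOp_false, fourOp_true, fourOpMul, conjIf_conjIf, conjIf_transpose]

theorem fourOp_sum {α : Type*} (σ : Bool × Bool) (s : Finset α) (M : α → Matrix k k ℂ) :
    fourOp σ (∑ a ∈ s, M a) = ∑ a ∈ s, fourOp σ (M a) := by
  rcases σ with ⟨_ | _, _ | _⟩ <;> ext <;> simp [fourOp, Matrix.sum_apply]

theorem fourOp_real_smul (σ : Bool × Bool) (r : ℝ) (M : Matrix k k ℂ) :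
    fourOp σ (r • M) = r • fourOp σ M := by
  rcases σ with ⟨_ | _, _ | _⟩ <;> ext <;> simp [fourOp]

theorem fourOp_average (σ : Bool × Bool) (M : Bool × Bool → Matrix k k ℂ) :
    fourOp σ (∑ τ, fourOp τ (M τ)) = ∑ τ, fourOp τ (M (fourOpMul τ σ)) := by
  rw [fourOp_sum]
  refine Fintype.sum_equiv ⟨fourOpMul σ, fourOpMul σ, fun τ => ?_, fun τ => ?_⟩ _ _ fun τ => ?_
  · simp [fourOpMul]
  · simp [fourOpMul]
  · simp [fourOp_fourOp, fourOpMul_fourOpMul_cancel]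

end fourOp

section JmatC

variable (k : ℕ)

theorem JmatC_mul_self : JmatC k * JmatC k = -1 := by
  simp [JmatC, fromBlocks_multiply, ← fromBlocks_one, fromBlocks_neg]

theorem JmatC_mul_JmatC_mul {l : Type*} (M : Matrix (Fin k ⊕ Fin k) l ℂ) :
    JmatC k * (JmatC k * M) = -M := by
  rw [← Matrix.mul_assoc, JmatC_mul_self, Matrix.neg_mul, Matrix.one_mul]

theorem inv_JmatC : (JmatC k)⁻¹ = -JmatC k :=
  inv_eq_right_inv (by rw [Matrix.mul_neg, JmatC_mul_self, neg_neg])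

theorem isUnit_JmatC : IsUnit (JmatC k) :=
  ⟨⟨JmatC k, -JmatC k, by rw [Matrix.mul_neg, JmatC_mul_self, neg_neg],
    by rw [Matrix.neg_mul, JmatC_mul_self, neg_neg]⟩, rfl⟩

theorem transpose_JmatC : (JmatC k)ᵀ = (JmatC k)⁻¹ := by
  rw [inv_JmatC]
  simp [JmatC, fromBlocks_transpose, fromBlocks_neg]

@[simp] theorem conjIf_JmatC (b : Bool) : conjIf b (JmatC k) = JmatC k := by
  simp [JmatC, conjIf_fromBlocks, conjIf_neg]

variable {k} in
theorem inv_JmatC_mul_fromBlocks_mul_JmatC {l : ℕ} (P : Matrix (Fin k) (Fin l) ℂ)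
    (Q : Matrix (Fin k) (Fin l) ℂ) (R : Matrix (Fin k) (Fin l) ℂ) (S : Matrix (Fin k) (Fin l) ℂ) :
    (JmatC k)⁻¹ * fromBlocks P Q R S * JmatC l = fromBlocks S (-R) (-Q) P := by
  rw [inv_JmatC]
  simp [JmatC, fromBlocks_multiply, fromBlocks_neg]

end JmatC

section angFour

variable {k : ℕ}

theorem angFour_false (b : Bool) (P : Matrix (Fin k ⊕ Fin k) (Fin k ⊕ Fin k) ℂ) :
    angFour (b, false) P = conjIf b P := rfl

theorem angFour_true (b : Bool) (P : Matrix (Fin k ⊕ Fin k) (Fin k ⊕ Fin k) ℂ) :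
    angFour (b, true) P = JmatC k * (conjIf b P)ᵀ⁻¹ * (JmatC k)⁻¹ := rfl

theorem isUnit_angFour (σ : Bool × Bool) {P : Matrix (Fin k ⊕ Fin k) (Fin k ⊕ Fin k) ℂ}
    (hP : IsUnit P) : IsUnit (angFour σ P) := by
  rcases σ with ⟨b, _ | _⟩
  · exact isUnit_conjIf b hP
  · rw [angFour_true, inv_JmatC]
    exact ((isUnit_JmatC k).mul (isUnit_nonsing_inv_iff.2
      ((isUnit_transpose _).2 (isUnit_conjIf b hP)))).mul (isUnit_JmatC k).neg

theorem angFour_angFour (σ τ : Bool × Bool) {P : Matrix (Fin k ⊕ Fin k) (Fin k ⊕ Fin k) ℂ}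
    (hP : IsUnit P) : angFour σ (angFour τ P) = angFour (fourOpMul σ τ) P := by
  rcases σ with ⟨a, _ | _⟩ <;> rcases τ with ⟨b, _ | _⟩
  · simp [angFour_false, fourOpMul, conjIf_conjIf]
  · simp [angFour_false, angFour_true, fourOpMul, conjIf_conjIf, conjIf_mul, conjIf_nonsing_inv,
      conjIf_transpose]
  · simp [angFour_false, angFour_true, fourOpMul, conjIf_conjIf]
  · have hdet : IsUnit (conjIf (xor a b) P).det :=
      (isUnit_iff_isUnit_det _).1 (isUnit_conjIf _ hP)
    have hJ : IsUnit (JmatC k).det := (isUnit_iff_isUnit_det _).1 (isUnit_JmatC k)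
    simp only [angFour_true, fourOpMul, conjIf_conjIf, conjIf_mul, conjIf_nonsing_inv,
      conjIf_transpose, conjIf_JmatC, transpose_mul, transpose_nonsing_inv, transpose_transpose,
      transpose_JmatC, Matrix.mul_inv_rev, nonsing_inv_nonsing_inv _ hdet,
      nonsing_inv_nonsing_inv _ hJ]
    rw [inv_JmatC]
    simp [Matrix.mul_assoc, JmatC_mul_JmatC_mul, JmatC_mul_self, angFour_false]

end angFour

theorem angFour_fromBlocks_one {k : ℕ} (σ : Bool × Bool) (X : Matrix (Fin k) (Fin k) ℂ) :
    angFour σ (fromBlocks 1 X 0 1) = fromBlocks 1 (fourOp σ X) 0 1 := by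
  rcases σ with ⟨b, _ | _⟩
  · simp [angFour_false, fourOp_false, conjIf_fromBlocks]
  · have hinv : (fromBlocks 1 0 (conjIf b X)ᵀ 1 : Matrix (Fin k ⊕ Fin k) (Fin k ⊕ Fin k) ℂ)⁻¹ =
        fromBlocks 1 0 (-(conjIf b X)ᵀ) 1 :=
      inv_eq_right_inv (by simp [fromBlocks_multiply, ← fromBlocks_one])
    rw [angFour_true, fourOp_true, conjIf_fromBlocks, conjIf_one, conjIf_zero, fromBlocks_transpose,
      transpose_one, transpose_zero, hinv, inv_JmatC]
    simp [JmatC, fromBlocks_multiply, fromBlocks_neg]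

theorem angFour_true_intertwines {k l : ℕ} (b : Bool)
    {M N : Matrix (Fin l ⊕ Fin l) (Fin k ⊕ Fin k) ℂ} {Φ : Matrix (Fin k ⊕ Fin k) (Fin k ⊕ Fin k) ℂ}
    {Ψ : Matrix (Fin l ⊕ Fin l) (Fin l ⊕ Fin l) ℂ} (hΦ : IsUnit Φ) (hΨ : IsUnit Ψ)
    (h : M * Φ = Ψ * N) :
    (JmatC k)⁻¹ * (conjIf b M)ᵀ * JmatC l * angFour (b, true) Ψ =
      angFour (b, true) Φ * ((JmatC k)⁻¹ * (conjIf b N)ᵀ * JmatC l) := by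
  have hΦ : IsUnit (conjIf b Φ)ᵀ.det :=
    (isUnit_iff_isUnit_det _).1 ((isUnit_transpose _).2 (isUnit_conjIf b hΦ))
  have hΨ : IsUnit (conjIf b Ψ)ᵀ.det :=
    (isUnit_iff_isUnit_det _).1 ((isUnit_transpose _).2 (isUnit_conjIf b hΨ))
  have h' : (conjIf b Φ)ᵀ * (conjIf b M)ᵀ = (conjIf b N)ᵀ * (conjIf b Ψ)ᵀ := by
    simpa [conjIf_mul] using congrArg (fun X => (conjIf b X)ᵀ) h
  have key : (conjIf b M)ᵀ * (conjIf b Ψ)ᵀ⁻¹ = (conjIf b Φ)ᵀ⁻¹ * (conjIf b N)ᵀ := by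
    calc (conjIf b M)ᵀ * (conjIf b Ψ)ᵀ⁻¹
        = (conjIf b Φ)ᵀ⁻¹ * ((conjIf b Φ)ᵀ * (conjIf b M)ᵀ) * (conjIf b Ψ)ᵀ⁻¹ := by
          rw [nonsing_inv_mul_cancel_left _ _ hΦ]
      _ = (conjIf b Φ)ᵀ⁻¹ * (conjIf b N)ᵀ := by
          rw [h', Matrix.mul_assoc, Matrix.mul_assoc, mul_nonsing_inv _ hΨ, Matrix.mul_one]
  rw [angFour_true, angFour_true, inv_JmatC, inv_JmatC]
  simp only [Matrix.neg_mul, Matrix.mul_neg, neg_neg, Matrix.mul_assoc, JmatC_mul_JmatC_mul]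
  rw [← Matrix.mul_assoc (conjIf b M)ᵀ, key, Matrix.mul_assoc]

section OrbitSystem

variable {s t : ℕ} (n : Fin t → ℕ) (f g : Fin s → Fin t) (ε δ : Fin s → Bool × Bool)
  (A B C : ∀ i : Fin s, Matrix (Fin (n (g i))) (Fin (n (f i))) ℂ)

-- Equation `(i, σ)` is equation `i` with `σ` applied (a transposing `σ` swaps its two sides and
-- negates `C`); unknown `(j, τ)` stands for `fourOp τ (X j)`.
def orbitP : Fin s × (Bool × Bool) → Fin t × (Bool × Bool)
  | (i, b, false) => (f i, fourOpMul (b, false) (ε i))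
  | (i, b, true) => (g i, fourOpMul (b, true) (δ i))

def orbitQ : Fin s × (Bool × Bool) → Fin t × (Bool × Bool)
  | (i, b, false) => (g i, fourOpMul (b, false) (δ i))
  | (i, b, true) => (f i, fourOpMul (b, true) (ε i))

def orbitA : ∀ x, Matrix (Fin (n (orbitQ f g ε δ x).1)) (Fin (n (orbitP f g ε δ x).1)) ℂ
  | (i, b, false) => conjIf b (A i)
  | (i, b, true) => (conjIf b (B i))ᵀ

def orbitB : ∀ x, Matrix (Fin (n (orbitQ f g ε δ x).1)) (Fin (n (orbitP f g ε δ x).1)) ℂ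
  | (i, b, false) => conjIf b (B i)
  | (i, b, true) => (conjIf b (A i))ᵀ

def orbitC : ∀ x, Matrix (Fin (n (orbitQ f g ε δ x).1)) (Fin (n (orbitP f g ε δ x).1)) ℂ
  | (i, b, false) => conjIf b (C i)
  | (i, b, true) => -(conjIf b (C i))ᵀ

theorem orbit_fromBlocks_intertwined
    {P : ∀ j, Matrix (Fin (n j) ⊕ Fin (n j)) (Fin (n j) ⊕ Fin (n j)) ℂ} (hP : ∀ j, IsUnit (P j))
    (hc : ∀ i, fromBlocks (A i) 0 0 (B i) * angFour (ε i) (P (f i)) =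
      angFour (δ i) (P (g i)) * fromBlocks (A i) (C i) 0 (B i)) (x : Fin s × (Bool × Bool)) :
    fromBlocks (orbitA n f g ε δ A B x) 0 0 (orbitB n f g ε δ A B x) *
        angFour (orbitP f g ε δ x).2 (P (orbitP f g ε δ x).1) =
      angFour (orbitQ f g ε δ x).2 (P (orbitQ f g ε δ x).1) *
        fromBlocks (orbitA n f g ε δ A B x) (orbitC n f g ε δ C x) 0 (orbitB n f g ε δ A B x) := by
  obtain ⟨i, b, _ | _⟩ := x
  · have h := congrArg (conjIf b) (hc i)
    rw [conjIf_mul, conjIf_mul, conjIf_fromBlocks, conjIf_fromBlocks, conjIf_zero,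
      ← angFour_false, ← angFour_false, angFour_angFour _ _ (hP _),
      angFour_angFour _ _ (hP _)] at h
    exact h
  · have h := angFour_true_intertwines b (isUnit_angFour _ (hP _)) (isUnit_angFour _ (hP _)) (hc i)
    rw [angFour_angFour _ _ (hP _), angFour_angFour _ _ (hP _)] at h
    simp only [conjIf_fromBlocks, conjIf_zero, fromBlocks_transpose, transpose_zero,
      inv_JmatC_mul_fromBlocks_mul_JmatC, neg_zero] at h
    exact h

variable {n f g ε δ A B C} in
theorem fourOp_solves_of_orbit
    {U : ∀ x : Fin t × (Bool × Bool), Matrix (Fin (n x.1)) (Fin (n x.1)) ℂ}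
    (hU : ∀ x, orbitA n f g ε δ A B x * U (orbitP f g ε δ x) -
      U (orbitQ f g ε δ x) * orbitB n f g ε δ A B x = orbitC n f g ε δ C x)
    (i : Fin s) (σ : Bool × Bool) :
    A i * fourOp σ (U (f i, fourOpMul σ (ε i))) - fourOp σ (U (g i, fourOpMul σ (δ i))) * B i =
      C i := by
  obtain ⟨b, _ | _⟩ := σ
  · have h : conjIf b (A i) * U (f i, fourOpMul (b, false) (ε i)) -
        U (g i, fourOpMul (b, false) (δ i)) * conjIf b (B i) = conjIf b (C i) := hU (i, b, false)
    simpa [conjIf_sub, conjIf_mul, fourOp_false] using congrArg (conjIf b) h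
  · have h : (conjIf b (B i))ᵀ * U (g i, fourOpMul (b, true) (δ i)) -
        U (f i, fourOpMul (b, true) (ε i)) * (conjIf b (A i))ᵀ = -(conjIf b (C i))ᵀ :=
      hU (i, b, true)
    have h' := congrArg (fun X => (conjIf b X)ᵀ) h
    simp only [conjIf_sub, conjIf_mul, conjIf_neg, conjIf_transpose, conjIf_conjIf_self,
      transpose_sub, transpose_mul, transpose_neg, transpose_transpose] at h'
    rw [fourOp_true, fourOp_true, ← neg_sub, h', neg_neg]

variable {n f g ε δ A B C} in
theorem exists_solution_of_orbit
    {U : ∀ x : Fin t × (Bool × Bool), Matrix (Fin (n x.1)) (Fin (n x.1)) ℂ}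
    (hU : ∀ x, orbitA n f g ε δ A B x * U (orbitP f g ε δ x) -
      U (orbitQ f g ε δ x) * orbitB n f g ε δ A B x = orbitC n f g ε δ C x) :
    ∃ X : ∀ j, Matrix (Fin (n j)) (Fin (n j)) ℂ,
      ∀ i, A i * fourOp (ε i) (X (f i)) - fourOp (δ i) (X (g i)) * B i = C i := by
  refine ⟨fun j => (4 : ℝ)⁻¹ • ∑ τ, fourOp τ (U (j, τ)), fun i => ?_⟩
  simp only [fourOp_real_smul, fourOp_average, Matrix.mul_smul, Matrix.smul_mul, ← smul_sub,
    Matrix.mul_sum, Matrix.sum_mul, ← Finset.sum_sub_distrib, fourOp_solves_of_orbit hU]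
  rw [Finset.sum_const, Finset.card_univ, ← Nat.cast_smul_eq_nsmul ℝ, smul_smul]
  norm_num

end OrbitSystem

/-- Corollary (b) of the paper: over `ℂ`, the system
`A_i X_{f i}^{ε_i} - X_{g i}^{δ_i} B_i = C_i` with
`ε_i, δ_i ∈ {id, conj, ⊤, *}` is solvable iff there exist invertible `P_1,…,P_t` with
`[[A_i,0],[0,B_i]] P_{f i}^{⟪ε_i⟫} = P_{g i}^{⟪δ_i⟫} [[A_i,C_i],[0,B_i]]`. -/
theorem roth_system_complex {s t : ℕ}
    (n : Fin t → ℕ) (f g : Fin s → Fin t) (ε δ : Fin s → Bool × Bool)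
    (A B C : ∀ i : Fin s, Matrix (Fin (n (g i))) (Fin (n (f i))) ℂ) :
    (∃ X : ∀ j : Fin t, Matrix (Fin (n j)) (Fin (n j)) ℂ,
        ∀ i, A i * fourOp (ε i) (X (f i)) - fourOp (δ i) (X (g i)) * B i = C i) ↔
      ∃ P : ∀ j : Fin t,
          Matrix (Fin (n j) ⊕ Fin (n j)) (Fin (n j) ⊕ Fin (n j)) ℂ,
        (∀ j, IsUnit (P j)) ∧
        ∀ i, fromBlocks (A i) 0 0 (B i) * angFour (ε i) (P (f i))
              = angFour (δ i) (P (g i)) * fromBlocks (A i) (C i) 0 (B i) := by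
  constructor
  · rintro ⟨X, hX⟩
    refine ⟨fun j => fromBlocks 1 (X j) 0 1, fun j => ?_, fun i => ?_⟩
    · rw [isUnit_iff_isUnit_det, det_fromBlocks_zero₂₁]
      simp
    · rw [angFour_fromBlocks_one, angFour_fromBlocks_one, fromBlocks_multiply, fromBlocks_multiply,
        ← hX i]
      simp
  · rintro ⟨P, hP, hc⟩
    obtain ⟨U, hU⟩ := exists_sylvester_solution (V := fun x : Fin t × (Bool × Bool) => Fin (n x.1))
      (fun x => isUnit_angFour x.2 (hP x.1)) (orbit_fromBlocks_intertwined n f g ε δ A B C hP hc)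
    exact exists_solution_of_orbit hU
end
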